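/- arXiv:2404.13780 — 6 statements merged into one kernel-verified Lean document; each statement's English description precedes it below -/
import Mathlib

section
/- Mixed-domain interface trace bound: let l > 0, let w : [-l,0] → ℝ be continuously differentiable on [-l,0], and let v : [0,1] → ℝ be continuously differentiable on [0,1]. Then |w(0)·v(0)| ≤ √(6/l + 3) · ‖w‖_{H¹(-l,0)} · ‖v‖_{H¹(0,1)}. -/
/-! For `u ∈ C¹[a,b]` and `x, c ∈ [a,b]`, `u(c)² - u(x)² = ∫ₓᶜ 2uu' ≤ ∫ₐᵇ (u² + u'²)` because
`2|uu'| ≤ u² + u'²`; averaging over `x` gives `u(c)² ≤ (1/(b-a) + 1) ‖u‖²_{H¹(a,b)}`.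
On `[-l,0]` and `[0,1]` this gives `w(0)² v(0)² ≤ (1/l + 1) · 2 · ‖w‖²_{H¹} ‖v‖²_{H¹}`,
and `2/l + 2 ≤ 6/l + 3`. -/

open Set MeasureTheory intervalIntegral
open scoped Interval

section TraceOnInterval

variable {a b : ℝ} {u u' : ℝ → ℝ}
  (hu : ∀ x ∈ Icc a b, HasDerivWithinAt u (u' x) (Icc a b) x)
  (hu' : ContinuousOn u' (Icc a b))
include hu hu'

theorem integral_two_mul_mul_deriv_eq_sq_sub_sq {x c : ℝ} (hx : x ∈ Icc a b) (hc : c ∈ Icc a b) :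
    ∫ y in x..c, 2 * u y * u' y = u c ^ 2 - u x ^ 2 := by
  have hsub : uIcc x c ⊆ Icc a b := uIcc_subset_Icc hx hc
  have hcont : ContinuousOn u (Icc a b) := HasDerivWithinAt.continuousOn hu
  refine integral_eq_sub_of_hasDeriv_right ((hcont.mono hsub).pow 2) (fun y hy => ?_)
    (((continuousOn_const.mul hcont).mul hu').mono hsub |>.intervalIntegrable)
  have hy' : y ∈ Ioo a b :=
    Ioo_subset_Ioo (le_min hx.1 hc.1) (max_le hx.2 hc.2) hy
  have := ((hu y (Ioo_subset_Icc_self hy')).hasDerivAt (Icc_mem_nhds hy'.1 hy'.2)).pow 2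
  simpa [mul_comm] using this.hasDerivWithinAt

theorem sq_le_sq_add_integral_sq_add_sq {x c : ℝ} (hx : x ∈ Icc a b) (hc : c ∈ Icc a b) :
    u c ^ 2 ≤ u x ^ 2 + ∫ y in a..b, (u y ^ 2 + u' y ^ 2) := by
  have hcont : ContinuousOn u (Icc a b) := HasDerivWithinAt.continuousOn hu
  have hint : IntegrableOn (fun y => u y ^ 2 + u' y ^ 2) (Ioc a b) :=
    ((hcont.pow 2).add (hu'.pow 2)).integrableOn_Icc.mono_set Ioc_subset_Icc_self
  have hab : a ≤ b := hx.1.trans hx.2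
  have hsub : Ι x c ⊆ Ioc a b := Ioc_subset_Ioc (le_min hx.1 hc.1) (max_le hx.2 hc.2)
  have key : u c ^ 2 - u x ^ 2 ≤ ∫ y in a..b, (u y ^ 2 + u' y ^ 2) := calc
    u c ^ 2 - u x ^ 2 = ∫ y in x..c, 2 * u y * u' y :=
      (integral_two_mul_mul_deriv_eq_sq_sub_sq hu hu' hx hc).symm
    _ ≤ ‖∫ y in x..c, 2 * u y * u' y‖ := Real.le_norm_self _
    _ ≤ ∫ y in Ι x c, ‖2 * u y * u' y‖ := norm_integral_le_integral_norm_uIoc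
    _ ≤ ∫ y in Ι x c, (u y ^ 2 + u' y ^ 2) := by
      refine integral_mono_of_nonneg (ae_of_all _ fun y => norm_nonneg _) (hint.mono_set hsub)
        (ae_of_all _ fun y => ?_)
      simpa only [Real.norm_eq_abs, abs_mul, abs_two, sq_abs] using two_mul_le_add_sq |u y| |u' y|
    _ ≤ ∫ y in Ioc a b, (u y ^ 2 + u' y ^ 2) :=
      setIntegral_mono_set hint (ae_of_all _ fun y => by positivity) hsub.eventuallyLE
    _ = ∫ y in a..b, (u y ^ 2 + u' y ^ 2) := (integral_of_le hab).symm
  linarith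

theorem sq_le_inv_length_add_one_mul_integral {c : ℝ} (hab : a < b) (hc : c ∈ Icc a b) :
    u c ^ 2 ≤ (1 / (b - a) + 1) * ∫ y in a..b, (u y ^ 2 + u' y ^ 2) := by
  set E := ∫ y in a..b, (u y ^ 2 + u' y ^ 2)
  have hcont : ContinuousOn u (Icc a b) := HasDerivWithinAt.continuousOn hu
  have hu2 : IntervalIntegrable (fun y => u y ^ 2) volume a b :=
    (hcont.pow 2).intervalIntegrable_of_Icc hab.le
  have hsq_le : ∫ y in a..b, u y ^ 2 ≤ E :=
    integral_mono_on hab.le hu2 (hu2.add ((hu'.pow 2).intervalIntegrable_of_Icc hab.le))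
      fun y _ => le_add_of_nonneg_right (sq_nonneg _)
  have haverage : (b - a) * u c ^ 2 ≤ (∫ y in a..b, u y ^ 2) + (b - a) * E := by
    have := integral_mono_on hab.le intervalIntegrable_const (hu2.add intervalIntegrable_const)
      fun x hx => sq_le_sq_add_integral_sq_add_sq hu hu' hx hc
    simpa [integral_add hu2 intervalIntegrable_const] using this
  have hba : 0 < b - a := sub_pos.mpr hab
  have hscale : (b - a) * ((1 / (b - a) + 1) * E) = E + (b - a) * E := by
    field_simp
  exact le_of_mul_le_mul_left (by linarith) hba

end TraceOnInterval

/-- Mixed-domain interface trace bound: for `l > 0`, `w` continuously differentiable on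
`[-l,0]` and `v` continuously differentiable on `[0,1]`,
`|w(0)·v(0)| ≤ √(6/l + 3) · ‖w‖_{H¹(-l,0)} · ‖v‖_{H¹(0,1)}`. -/
theorem mixed_domain_interface_trace_bound
    (l : ℝ) (hl : 0 < l) (w w' v v' : ℝ → ℝ)
    (hw : ∀ x ∈ Set.Icc (-l) 0, HasDerivWithinAt w (w' x) (Set.Icc (-l) 0) x)
    (hw' : ContinuousOn w' (Set.Icc (-l) 0))
    (hv : ∀ x ∈ Set.Icc (0 : ℝ) 1, HasDerivWithinAt v (v' x) (Set.Icc (0 : ℝ) 1) x)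
    (hv' : ContinuousOn v' (Set.Icc (0 : ℝ) 1)) :
    |w 0 * v 0| ≤ Real.sqrt (6 / l + 3) *
      Real.sqrt (∫ x in (-l)..0, ((w x) ^ 2 + (w' x) ^ 2)) *
      Real.sqrt (∫ x in (0 : ℝ)..1, ((v x) ^ 2 + (v' x) ^ 2)) := by
  set Ew := ∫ x in (-l)..0, ((w x) ^ 2 + (w' x) ^ 2)
  set Ev := ∫ x in (0 : ℝ)..1, ((v x) ^ 2 + (v' x) ^ 2)
  have hEw : 0 ≤ Ew := integral_nonneg (by linarith) fun x _ => by positivity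
  have hEv : 0 ≤ Ev := integral_nonneg zero_le_one fun x _ => by positivity
  have hw0 : w 0 ^ 2 ≤ (1 / l + 1) * Ew := by
    simpa using sq_le_inv_length_add_one_mul_integral hw hw' (neg_lt_zero.mpr hl)
      (right_mem_Icc.mpr (neg_nonpos.mpr hl.le))
  have hv0 : v 0 ^ 2 ≤ 2 * Ev := by
    have := sq_le_inv_length_add_one_mul_integral hv hv' zero_lt_one
      (left_mem_Icc.mpr zero_le_one)
    norm_num at this
    exact this
  have hprod : (w 0 * v 0) ^ 2 ≤ (6 / l + 3) * Ew * Ev := calc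
    (w 0 * v 0) ^ 2 ≤ (1 / l + 1) * Ew * (2 * Ev) := by
      rw [mul_pow]; exact mul_le_mul hw0 hv0 (sq_nonneg _) (by positivity)
    _ = (2 / l + 2) * Ew * Ev := by ring
    _ ≤ (6 / l + 3) * Ew * Ev := by gcongr <;> norm_num
  calc |w 0 * v 0| = Real.sqrt ((w 0 * v 0) ^ 2) := (Real.sqrt_sq_eq_abs _).symm
    _ ≤ Real.sqrt ((6 / l + 3) * Ew * Ev) := Real.sqrt_le_sqrt hprod
    _ = Real.sqrt (6 / l + 3) * Real.sqrt Ew * Real.sqrt Ev := by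
      rw [Real.sqrt_mul (by positivity), Real.sqrt_mul (by positivity)]
end

section
/- Coercivity of the stent bilinear form: let δ, P̃, l > 0 and let w : [-l,0] → ℝ be continuously differentiable on [-l,0]. Then A[w,w] ≥ δ·min(1/(2l² + 1), P̃/(2l)) · ‖w‖_{H¹(-l,0)}², where A[w,v] := δ·∫_{-l}^0 w'(x)v'(x) dx + δ·P̃·w(0)v(0). -/
/-!
Writing `w x = w 0 - ∫ t in x..0, w' t` and applying Cauchy–Schwarz gives the pointwise
bound `w x ^ 2 ≤ 2 w(0)² + 2l ‖w'‖²`, and integrating it the Poincaré-type inequality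
`‖w‖² ≤ 2l w(0)² + 2l² ‖w'‖²`. Hence `‖w‖²_{H¹} ≤ 2l w(0)² + (2l² + 1) ‖w'‖²`, and the
constant `min (1 / (2l² + 1)) (P̃ / (2l))` is exactly what makes this, multiplied by it,
at most `‖w'‖² + P̃ w(0)²`.
-/

open Set MeasureTheory

theorem sq_integral_le_measureReal_univ_mul_integral_sq {α : Type*} [MeasurableSpace α]
    {μ : Measure α} [IsFiniteMeasure μ] {f : α → ℝ} (hf : Integrable f μ)
    (hf2 : Integrable (fun x => f x ^ 2) μ) :
    (∫ x, f x ∂μ) ^ 2 ≤ μ.real univ * ∫ x, f x ^ 2 ∂μ := by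
  have hquad : ∀ s : ℝ,
      0 ≤ μ.real univ * (s * s) + (-2 * ∫ x, f x ∂μ) * s + ∫ x, f x ^ 2 ∂μ := by
    intro s
    have hexp : ∫ x, (f x - s) ^ 2 ∂μ
        = μ.real univ * (s * s) + (-2 * ∫ x, f x ∂μ) * s + ∫ x, f x ^ 2 ∂μ := by
      have : ∀ x, (f x - s) ^ 2 = f x ^ 2 - 2 * s * f x + s * s := fun x => by ring
      simp only [this]
      have hlin : Integrable (fun x => f x ^ 2 - 2 * s * f x) μ := hf2.sub (hf.const_mul _)
      rw [integral_add hlin (integrable_const _), integral_sub hf2 (hf.const_mul _),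
        integral_const_mul, integral_const, smul_eq_mul]
      ring
    exact hexp ▸ integral_nonneg fun x => sq_nonneg _
  have := discrim_le_zero hquad
  rw [discrim] at this
  linarith

theorem sq_intervalIntegral_le_mul_integral_sq {a b : ℝ} (hab : a ≤ b) {f : ℝ → ℝ}
    (hf : IntervalIntegrable f volume a b)
    (hf2 : IntervalIntegrable (fun x => f x ^ 2) volume a b) :
    (∫ x in a..b, f x) ^ 2 ≤ (b - a) * ∫ x in a..b, f x ^ 2 := by
  rw [intervalIntegral.integral_of_le hab, intervalIntegral.integral_of_le hab,
    ← Real.volume_real_Ioc_of_le hab]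
  simpa [Measure.real, Measure.restrict_apply] using
    sq_integral_le_measureReal_univ_mul_integral_sq hf.1 hf2.1

section Interval

variable {a b : ℝ} {w w' : ℝ → ℝ}

theorem integral_eq_sub_of_hasDerivWithinAt_Icc (hab : a ≤ b)
    (hw : ∀ x ∈ Icc a b, HasDerivWithinAt w (w' x) (Icc a b) x)
    (hw' : IntervalIntegrable w' volume a b) :
    ∫ t in a..b, w' t = w b - w a :=
  intervalIntegral.integral_eq_sub_of_hasDerivAt_of_le hab
    (fun x hx => (hw x hx).continuousWithinAt)
    (fun x hx => (hw x (Ioo_subset_Icc_self hx)).hasDerivAt (Icc_mem_nhds hx.1 hx.2)) hw'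

theorem sq_le_of_hasDerivWithinAt_Icc
    (hw : ∀ x ∈ Icc a b, HasDerivWithinAt w (w' x) (Icc a b) x)
    (hw' : ContinuousOn w' (Icc a b)) {x : ℝ} (hx : x ∈ Icc a b) :
    w x ^ 2 ≤ 2 * w b ^ 2 + 2 * (b - a) * ∫ t in a..b, w' t ^ 2 := by
  have hsub : Icc x b ⊆ Icc a b := Icc_subset_Icc_left hx.1
  have hw'x : ContinuousOn w' (Icc x b) := hw'.mono hsub
  have hftc : w b - w x = ∫ t in x..b, w' t :=
    (integral_eq_sub_of_hasDerivWithinAt_Icc hx.2 (fun t ht => (hw t (hsub ht)).mono hsub)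
      (hw'x.intervalIntegrable_of_Icc hx.2)).symm
  have hcs := sq_intervalIntegral_le_mul_integral_sq hx.2
    (hw'x.intervalIntegrable_of_Icc hx.2) ((hw'x.pow 2).intervalIntegrable_of_Icc hx.2)
  have hmono : ∫ t in x..b, w' t ^ 2 ≤ ∫ t in a..b, w' t ^ 2 :=
    intervalIntegral.integral_mono_interval hx.1 hx.2 le_rfl
      (Filter.Eventually.of_forall fun t => sq_nonneg _)
      ((hw'.pow 2).intervalIntegrable_of_Icc (hx.1.trans hx.2))
  have hnn : 0 ≤ ∫ t in x..b, w' t ^ 2 :=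
    intervalIntegral.integral_nonneg hx.2 fun t _ => sq_nonneg _
  calc w x ^ 2 = (w b - ∫ t in x..b, w' t) ^ 2 := by rw [← hftc]; ring
    _ ≤ 2 * w b ^ 2 + 2 * (∫ t in x..b, w' t) ^ 2 := by
      nlinarith [sq_nonneg (w b + ∫ t in x..b, w' t)]
    _ ≤ 2 * w b ^ 2 + 2 * ((b - x) * ∫ t in x..b, w' t ^ 2) := by gcongr
    _ ≤ 2 * w b ^ 2 + 2 * ((b - a) * ∫ t in a..b, w' t ^ 2) := by
      gcongr <;> linarith [hx.1, hx.2]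
    _ = 2 * w b ^ 2 + 2 * (b - a) * ∫ t in a..b, w' t ^ 2 := by ring

theorem integral_sq_le_of_hasDerivWithinAt_Icc (hab : a ≤ b)
    (hw : ∀ x ∈ Icc a b, HasDerivWithinAt w (w' x) (Icc a b) x)
    (hw' : ContinuousOn w' (Icc a b)) :
    ∫ x in a..b, w x ^ 2 ≤
      2 * (b - a) * w b ^ 2 + 2 * (b - a) ^ 2 * ∫ x in a..b, w' x ^ 2 := by
  calc ∫ x in a..b, w x ^ 2
      ≤ ∫ _ in a..b, (2 * w b ^ 2 + 2 * (b - a) * ∫ t in a..b, w' t ^ 2) :=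
        intervalIntegral.integral_mono_on hab
          (((HasDerivWithinAt.continuousOn hw).pow 2).intervalIntegrable_of_Icc hab)
          intervalIntegrable_const
          fun x hx => sq_le_of_hasDerivWithinAt_Icc hw hw' hx
    _ = _ := by rw [intervalIntegral.integral_const, smul_eq_mul]; ring

end Interval

/-- Coercivity of the stent bilinear form
`A[w,v] := δ·∫_{-l}^0 w'v' + δ·Pt·w(0)v(0)`:
`A[w,w] ≥ δ·min(1/(2l² + 1), Pt/(2l)) · ‖w‖_{H¹(-l,0)}²`. -/
theorem stent_bilinear_form_coercive
    (δ Pt l : ℝ) (hδ : 0 < δ) (hP : 0 < Pt) (hl : 0 < l) (w w' : ℝ → ℝ)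
    (hw : ∀ x ∈ Set.Icc (-l) 0, HasDerivWithinAt w (w' x) (Set.Icc (-l) 0) x)
    (hw' : ContinuousOn w' (Set.Icc (-l) 0)) :
    δ * (∫ x in (-l)..0, w' x * w' x) + δ * Pt * (w 0 * w 0) ≥
      δ * min (1 / (2 * l ^ 2 + 1)) (Pt / (2 * l)) *
        (∫ x in (-l)..0, ((w x) ^ 2 + (w' x) ^ 2)) := by
  have hl0 : -l ≤ 0 := by linarith
  have hpoincare := integral_sq_le_of_hasDerivWithinAt_Icc hl0 hw hw'
  rw [sub_neg_eq_add, zero_add] at hpoincare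
  set I := ∫ x in (-l)..0, w' x ^ 2
  have hI : 0 ≤ I := intervalIntegral.integral_nonneg hl0 fun x _ => sq_nonneg _
  have hw2 : IntervalIntegrable (fun x => w x ^ 2) volume (-l) 0 :=
    ((HasDerivWithinAt.continuousOn hw).pow 2).intervalIntegrable_of_Icc hl0
  have hw'2 : IntervalIntegrable (fun x => w' x ^ 2) volume (-l) 0 :=
    (hw'.pow 2).intervalIntegrable_of_Icc hl0
  rw [intervalIntegral.integral_add hw2 hw'2]
  simp only [← sq]
  set c := min (1 / (2 * l ^ 2 + 1)) (Pt / (2 * l))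
  have hc : 0 ≤ c := le_min (by positivity) (by positivity)
  have hc₁ : c * (2 * l ^ 2 + 1) ≤ 1 := (le_div_iff₀ (by positivity)).1 (min_le_left _ _)
  have hc₂ : c * (2 * l) ≤ Pt := (le_div_iff₀ (by positivity)).1 (min_le_right _ _)
  have key : c * ((∫ x in (-l)..0, w x ^ 2) + I) ≤ I + Pt * w 0 ^ 2 :=
    calc c * ((∫ x in (-l)..0, w x ^ 2) + I)
        ≤ c * (2 * l) * w 0 ^ 2 + c * (2 * l ^ 2 + 1) * I := by
          linarith [mul_le_mul_of_nonneg_left hpoincare hc]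
      _ ≤ Pt * w 0 ^ 2 + 1 * I := by gcongr
      _ = I + Pt * w 0 ^ 2 := by ring
  linarith [mul_le_mul_of_nonneg_left key hδ.le]
end

section
/- Coercivity of the wall bilinear form: let δ, P̃, Pe, Da > 0 and let w : [0,1] → ℝ be continuously differentiable on [0,1]. Then B[w,w] ≥ min(Da, 1) · ‖w‖_{H¹(0,1)}², where B[w,v] := Pe·∫_0^1 w'(x)v(x) dx + Da·∫_0^1 w(x)v(x) dx + ∫_0^1 w'(x)v'(x) dx + (δ·P̃ + Pe)·w(0)v(0). -/
/-- Coercivity of the wall bilinear form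
`B[w,v] := Pe·∫_0^1 w'v + Da·∫_0^1 wv + ∫_0^1 w'v' + (δ·Pt + Pe)·w(0)v(0)`:
`B[w,w] ≥ min(Da, 1) · ‖w‖_{H¹(0,1)}²`. -/
theorem wall_bilinear_form_coercive
    (δ Pt Pe Da : ℝ) (hδ : 0 < δ) (hP : 0 < Pt) (hPe : 0 < Pe) (hDa : 0 < Da)
    (w w' : ℝ → ℝ)
    (hw : ∀ x ∈ Set.Icc (0 : ℝ) 1, HasDerivWithinAt w (w' x) (Set.Icc (0 : ℝ) 1) x)
    (hw' : ContinuousOn w' (Set.Icc (0 : ℝ) 1)) :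
    Pe * (∫ x in (0 : ℝ)..1, w' x * w x) + Da * (∫ x in (0 : ℝ)..1, w x * w x) +
        (∫ x in (0 : ℝ)..1, w' x * w' x) + (δ * Pt + Pe) * (w 0 * w 0) ≥
      min Da 1 * (∫ x in (0 : ℝ)..1, ((w x) ^ 2 + (w' x) ^ 2)) := by
  have hwc : ContinuousOn w (Set.Icc (0 : ℝ) 1) :=
    fun x hx => (hw x hx).continuousWithinAt
  have huIcc : Set.uIcc (0:ℝ) 1 = Set.Icc 0 1 := by
    rw [Set.uIcc_of_le]; norm_num
  have hint_ww : IntervalIntegrable (fun x => w x * w x) MeasureTheory.volume 0 1 := by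
    apply ContinuousOn.intervalIntegrable
    rw [huIcc]; exact hwc.mul hwc
  have hint_w'w' : IntervalIntegrable (fun x => w' x * w' x) MeasureTheory.volume 0 1 := by
    apply ContinuousOn.intervalIntegrable
    rw [huIcc]; exact hw'.mul hw'
  have hint_w'w : IntervalIntegrable (fun x => 2 * (w' x * w x)) MeasureTheory.volume 0 1 := by
    apply ContinuousOn.intervalIntegrable
    rw [huIcc]; exact (continuousOn_const.mul (hw'.mul hwc))
  -- FTC: ∫ 2 w' w = w(1)² - w(0)²
  have hftc : ∫ x in (0:ℝ)..1, 2 * (w' x * w x) = w 1 * w 1 - w 0 * w 0 := by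
    apply intervalIntegral.integral_eq_sub_of_hasDeriv_right_of_le (by norm_num)
      (hwc.mul hwc)
    · intro x hx
      have hxm : x ∈ Set.Icc (0:ℝ) 1 := Set.mem_Icc_of_Ioo hx
      have hnb : Set.Icc (0:ℝ) 1 ∈ nhds x := Icc_mem_nhds hx.1 hx.2
      have := ((hw x hxm).hasDerivAt hnb).mul ((hw x hxm).hasDerivAt hnb)
      have h2 : w' x * w x + w x * w' x = 2 * (w' x * w x) := by ring
      exact (h2 ▸ this).hasDerivWithinAt
    · exact hint_w'w
  have hkey : ∫ x in (0:ℝ)..1, w' x * w x = (w 1 * w 1 - w 0 * w 0) / 2 := by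
    have : (2:ℝ) * ∫ x in (0:ℝ)..1, w' x * w x = w 1 * w 1 - w 0 * w 0 := by
      rw [← intervalIntegral.integral_const_mul]; exact hftc
    linarith
  have hsplit : (∫ x in (0:ℝ)..1, ((w x) ^ 2 + (w' x) ^ 2))
      = (∫ x in (0:ℝ)..1, w x * w x) + ∫ x in (0:ℝ)..1, w' x * w' x := by
    rw [← intervalIntegral.integral_add hint_ww hint_w'w']
    apply intervalIntegral.integral_congr
    intro x _; ring
  have hww_nonneg : (0:ℝ) ≤ ∫ x in (0:ℝ)..1, w x * w x :=
    intervalIntegral.integral_nonneg (by norm_num) (fun x _ => mul_self_nonneg _)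
  have hw'w'_nonneg : (0:ℝ) ≤ ∫ x in (0:ℝ)..1, w' x * w' x :=
    intervalIntegral.integral_nonneg (by norm_num) (fun x _ => mul_self_nonneg _)
  have hmin1 : min Da 1 ≤ Da := min_le_left _ _
  have hmin2 : min Da 1 ≤ 1 := min_le_right _ _
  have h1 : min Da 1 * (∫ x in (0:ℝ)..1, w x * w x) ≤ Da * ∫ x in (0:ℝ)..1, w x * w x :=
    mul_le_mul_of_nonneg_right hmin1 hww_nonneg
  have h2 : min Da 1 * (∫ x in (0:ℝ)..1, w' x * w' x) ≤ 1 * ∫ x in (0:ℝ)..1, w' x * w' x :=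
    mul_le_mul_of_nonneg_right hmin2 hw'w'_nonneg
  have hb : 0 ≤ Pe * ((w 1 * w 1 - w 0 * w 0) / 2) + (δ * Pt + Pe) * (w 0 * w 0) := by
    nlinarith [mul_self_nonneg (w 1), mul_self_nonneg (w 0), mul_pos hδ hP, hPe.le]
  rw [hkey, hsplit]
  nlinarith [h1, h2, hb]
end

section
/- Energy inequality for the stent (drug-coating) equation: let δ, P̃, l, T > 0, let g : [0,T] → ℝ be continuous, and let c : [-l,0] × [0,T] → ℝ be such that c, ∂_t c, ∂_x c, ∂_{xx} c are continuous on [-l,0] × [0,T], and suppose that ∂_t c(x,t) = δ·∂_{xx} c(x,t) for all (x,t) ∈ (-l,0) × (0,T], ∂_x c(-l,t) = 0 for all t ∈ (0,T], and ∂_x c(0,t) + P̃·c(0,t) = P̃·g(t) for all t ∈ (0,T]. Then for every ε > 0 and every t ∈ (0,T], the function t ↦ ∫_{-l}^0 c(x,t)² dx is differentiable and (1/2)·(d/dt)∫_{-l}^0 c(x,t)² dx + δ·∫_{-l}^0 (∂_x c(x,t))² dx + δ·P̃·c(0,t)² ≤ δ·P̃·(ε·c(0,t)² + g(t)²/(4ε)).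 -/
/-!
Writing `E(s) = ∫ c(x,s)² dx`, the fundamental theorem of calculus in time and Fubini on the
compact rectangle give `E(s) - E(t) = ∫ₜˢ ∫ 2 c ∂ₜc dx du` with a continuous inner integral, so
`E' = ∫ 2 c ∂ₜc`. By the equation and an integration by parts in `x`,
`∫ c ∂ₜc = δ (c ∂ₓc |₋ₗ⁰ - ∫ (∂ₓc)²)`; the boundary conditions turn this into
`½ E' + δ ∫ (∂ₓc)² + δ P̃ c(0)² = δ P̃ c(0) g`, and Young's inequality
`a b ≤ ε a² + b² / (4ε)` bounds the right-hand side.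
-/

open MeasureTheory Set Function intervalIntegral
open scoped Interval

section ParametricIntegral

variable {E : Type*} [NormedAddCommGroup E] [NormedSpace ℝ E]

theorem continuousOn_intervalIntegral_of_continuousOn_uncurry {X : Type*} [TopologicalSpace X]
    [FirstCountableTopology X] {f : ℝ → X → E} {a b : ℝ} {K : Set X} (hK : IsCompact K)
    (hf : ContinuousOn (uncurry f) ([[a, b]] ×ˢ K)) :
    ContinuousOn (fun u => ∫ x in a..b, f x u) K := by
  simp_rw [intervalIntegral_eq_integral_uIoc]
  refine continuousOn_const.smul ?_
  obtain ⟨M, hM⟩ := (isCompact_uIcc.prod hK).exists_bound_of_continuousOn hf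
  refine continuousOn_of_dominated (bound := fun _ => M) (fun u hu => ?_) (fun u hu => ?_)
    (integrableOn_const measure_Ioc_lt_top.ne) ?_
  · exact ((hf.uncurry_right u hu).aestronglyMeasurable measurableSet_uIcc).mono_measure
      (Measure.restrict_mono uIoc_subset_uIcc le_rfl)
  · filter_upwards [ae_restrict_mem measurableSet_uIoc] with x hx
    exact hM (x, u) ⟨uIoc_subset_uIcc hx, hu⟩
  · filter_upwards [ae_restrict_mem measurableSet_uIoc] with x hx
    exact hf.uncurry_left x (uIoc_subset_uIcc hx)

theorem integral_eq_sub_of_hasDerivWithinAt_Icc_s9 [CompleteSpace E] {f f' : ℝ → E} {p q s t : ℝ}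
    (hf : ∀ u ∈ Icc p q, HasDerivWithinAt f (f' u) (Icc p q) u)
    (hint : IntervalIntegrable f' volume t s) (hs : s ∈ Icc p q) (ht : t ∈ Icc p q) :
    ∫ u in t..s, f' u = f s - f t := by
  have hsub : [[t, s]] ⊆ Icc p q := uIcc_subset_Icc ht hs
  refine integral_eq_sub_of_hasDeriv_right
    (fun u hu => (hf u (hsub hu)).continuousWithinAt.mono hsub) (fun u hu => ?_) hint
  refine ((hf u (hsub (Ioo_subset_Icc_self hu))).hasDerivAt ?_).hasDerivWithinAt
  exact Filter.mem_of_superset (Ioo_mem_nhds hu.1 hu.2) (Ioo_subset_Icc_self.trans hsub)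

theorem intervalIntegral_sub_eq_integral_intervalIntegral [CompleteSpace E]
    {f f' : ℝ → ℝ → E} {a b p q s t : ℝ}
    (hfi : ∀ u ∈ Icc p q, IntervalIntegrable (fun x => f x u) volume a b)
    (hf' : ContinuousOn (uncurry f') ([[a, b]] ×ˢ Icc p q))
    (hf : ∀ x ∈ [[a, b]], ∀ u ∈ Icc p q, HasDerivWithinAt (f x) (f' x u) (Icc p q) u)
    (hs : s ∈ Icc p q) (ht : t ∈ Icc p q) :
    (∫ x in a..b, f x s) - ∫ x in a..b, f x t = ∫ u in t..s, ∫ x in a..b, f' x u := by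
  have hsub : [[t, s]] ⊆ Icc p q := uIcc_subset_Icc ht hs
  rw [← integral_sub (hfi s hs) (hfi t ht), ← intervalIntegral_intervalIntegral_swap]
  · refine integral_congr fun x hx =>
      (integral_eq_sub_of_hasDerivWithinAt_Icc_s9 (hf x hx) ?_ hs ht).symm
    exact ((hf'.uncurry_left x hx).mono hsub).intervalIntegrable
  · exact (hf'.integrableOn_compact (isCompact_uIcc.prod isCompact_Icc)).mono_set
      (prod_mono uIoc_subset_uIcc (uIoc_subset_uIcc.trans hsub))

theorem hasDerivWithinAt_intervalIntegral_Icc [CompleteSpace E]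
    {f f' : ℝ → ℝ → E} {a b p q t : ℝ}
    (hfi : ∀ u ∈ Icc p q, IntervalIntegrable (fun x => f x u) volume a b)
    (hf' : ContinuousOn (uncurry f') ([[a, b]] ×ˢ Icc p q))
    (hf : ∀ x ∈ [[a, b]], ∀ u ∈ Icc p q, HasDerivWithinAt (f x) (f' x u) (Icc p q) u)
    (ht : t ∈ Icc p q) :
    HasDerivWithinAt (fun s => ∫ x in a..b, f x s) (∫ x in a..b, f' x t) (Icc p q) t := by
  have hG := continuousOn_intervalIntegral_of_continuousOn_uncurry isCompact_Icc hf'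
  have : Fact (t ∈ Icc p q) := ⟨ht⟩
  have hprim : HasDerivWithinAt (fun s => ∫ u in t..s, ∫ x in a..b, f' x u)
      (∫ x in a..b, f' x t) (Icc p q) t :=
    integral_hasDerivWithinAt_right IntervalIntegrable.refl
      (hG.stronglyMeasurableAtFilter_nhdsWithin measurableSet_Icc t) (hG t ht)
  refine (hprim.const_add (∫ x in a..b, f x t)).congr (fun s hs => ?_) (by simp)
  rw [← intervalIntegral_sub_eq_integral_intervalIntegral hfi hf' hf hs ht, add_sub_cancel]

end ParametricIntegral

theorem integral_mul_eq_of_eqOn_const_mul_second_deriv {u u' u'' w : ℝ → ℝ} {a b δ : ℝ}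
    (hu : ∀ x ∈ [[a, b]], HasDerivWithinAt u (u' x) [[a, b]] x)
    (hu' : ∀ x ∈ [[a, b]], HasDerivWithinAt u' (u'' x) [[a, b]] x)
    (hu'' : IntervalIntegrable u'' volume a b)
    (hw : EqOn w (fun x => δ * u'' x) (uIoo a b)) :
    ∫ x in a..b, u x * w x = δ * (u b * u' b - u a * u' a - ∫ x in a..b, u' x ^ 2) := by
  have hu'i : IntervalIntegrable u' volume a b :=
    ContinuousOn.intervalIntegrable fun x hx => (hu' x hx).continuousWithinAt
  calc ∫ x in a..b, u x * w x = ∫ x in a..b, δ * (u x * u'' x) :=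
        integral_congr_uIoo fun x hx => by rw [hw hx, mul_left_comm]
    _ = δ * (u b * u' b - u a * u' a - ∫ x in a..b, u' x ^ 2) := by
        rw [intervalIntegral.integral_const_mul,
          integral_mul_deriv_eq_deriv_mul_of_hasDerivWithinAt hu hu' hu'i hu'']
        simp only [sq]

theorem mul_le_mul_sq_add_sq_div {ε : ℝ} (hε : 0 < ε) (a b : ℝ) :
    a * b ≤ ε * a ^ 2 + b ^ 2 / (4 * ε) := by
  rw [← sub_le_iff_le_add', le_div_iff₀ (by positivity)]
  nlinarith [sq_nonneg (2 * ε * a - b)]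

theorem stent_equation_energy_inequality_general
    (δ Pt l T : ℝ) (hδ : 0 < δ) (hPt : 0 < Pt) (hl : 0 < l)
    (g : ℝ → ℝ)
    (c ct cx cxx : ℝ → ℝ → ℝ)
    (hc : ContinuousOn (fun p : ℝ × ℝ => c p.1 p.2) (Set.Icc (-l) 0 ×ˢ Set.Icc 0 T))
    (hct : ContinuousOn (fun p : ℝ × ℝ => ct p.1 p.2) (Set.Icc (-l) 0 ×ˢ Set.Icc 0 T))
    (hcxx : ContinuousOn (fun p : ℝ × ℝ => cxx p.1 p.2) (Set.Icc (-l) 0 ×ˢ Set.Icc 0 T))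
    (hdt : ∀ x ∈ Set.Icc (-l) 0, ∀ t ∈ Set.Icc 0 T,
      HasDerivWithinAt (fun s => c x s) (ct x t) (Set.Icc 0 T) t)
    (hdx : ∀ x ∈ Set.Icc (-l) 0, ∀ t ∈ Set.Icc 0 T,
      HasDerivWithinAt (fun y => c y t) (cx x t) (Set.Icc (-l) 0) x)
    (hdxx : ∀ x ∈ Set.Icc (-l) 0, ∀ t ∈ Set.Icc 0 T,
      HasDerivWithinAt (fun y => cx y t) (cxx x t) (Set.Icc (-l) 0) x)
    (hpde : ∀ x ∈ Set.Ioo (-l) 0, ∀ t ∈ Set.Ioc 0 T, ct x t = δ * cxx x t)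
    (hbcl : ∀ t ∈ Set.Ioc 0 T, cx (-l) t = 0)
    (hbc0 : ∀ t ∈ Set.Ioc 0 T, cx 0 t + Pt * c 0 t = Pt * g t) :
    ∀ ε > (0 : ℝ), ∀ t ∈ Set.Ioc 0 T,
      ∃ d : ℝ,
        HasDerivWithinAt (fun s => ∫ x in (-l)..0, (c x s) ^ 2) d (Set.Icc 0 T) t ∧
        (1 / 2) * d + δ * (∫ x in (-l)..0, (cx x t) ^ 2) + δ * Pt * (c 0 t) ^ 2 ≤
          δ * Pt * (ε * (c 0 t) ^ 2 + (g t) ^ 2 / (4 * ε)) := by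
  intro ε hε t ht
  have ht' : t ∈ Icc 0 T := Ioc_subset_Icc_self ht
  have hl' : -l ≤ 0 := by linarith
  rw [← uIcc_of_le hl'] at hc hct hcxx hdt hdx hdxx
  rw [← uIoo_of_le hl'] at hpde
  have hderiv : HasDerivWithinAt (fun s => ∫ x in (-l)..0, c x s ^ 2)
      (∫ x in (-l)..0, 2 * c x t * ct x t) (Icc 0 T) t := by
    refine hasDerivWithinAt_intervalIntegral_Icc (f := fun x s => c x s ^ 2)
      (f' := fun x s => 2 * c x s * ct x s) (fun s hs => ?_) ?_ (fun x hx s hs => ?_) ht'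
    · exact ((hc.uncurry_right s hs).pow 2).intervalIntegrable
    · exact (continuousOn_const.mul hc).mul hct
    · simpa using (hdt x hx s hs).fun_pow 2
  have henergy : ∫ x in (-l)..0, c x t * ct x t =
      δ * (c 0 t * cx 0 t - c (-l) t * cx (-l) t - ∫ x in (-l)..0, cx x t ^ 2) :=
    integral_mul_eq_of_eqOn_const_mul_second_deriv (fun x hx => hdx x hx t ht')
      (fun x hx => hdxx x hx t ht') (hcxx.uncurry_right t ht').intervalIntegrable
      (fun x hx => hpde x hx t ht)
  refine ⟨_, hderiv, ?_⟩
  calc (1 / 2) * (∫ x in (-l)..0, 2 * c x t * ct x t) + δ * (∫ x in (-l)..0, (cx x t) ^ 2)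
          + δ * Pt * (c 0 t) ^ 2
        = δ * Pt * (c 0 t * g t) := by
        simp_rw [mul_assoc (2 : ℝ), intervalIntegral.integral_const_mul]
        rw [hbcl t ht] at henergy
        linear_combination henergy + δ * c 0 t * hbc0 t ht
    _ ≤ δ * Pt * (ε * (c 0 t) ^ 2 + (g t) ^ 2 / (4 * ε)) :=
        mul_le_mul_of_nonneg_left (mul_le_mul_sq_add_sq_div hε _ _) (by positivity)

/-- Energy inequality for the stent (drug-coating) equation: if `c` is a classical
solution of `∂ₜc = δ·c_xx` on `(-l,0) × (0,T]` with `c_x(-l,t) = 0` and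
`c_x(0,t) + Pt·c(0,t) = Pt·g(t)`, then for every `ε > 0` and `t ∈ (0,T]` the energy
`t ↦ ∫_{-l}^0 c(x,t)² dx` is differentiable (within `[0,T]`) and
`(1/2)·(d/dt)∫ c² + δ·∫ c_x² + δ·Pt·c(0,t)² ≤ δ·Pt·(ε·c(0,t)² + g(t)²/(4ε))`. -/
theorem stent_equation_energy_inequality
    (δ Pt l T : ℝ) (hδ : 0 < δ) (hPt : 0 < Pt) (hl : 0 < l) (hT : 0 < T)
    (g : ℝ → ℝ) (hg : ContinuousOn g (Set.Icc 0 T))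
    (c ct cx cxx : ℝ → ℝ → ℝ)
    (hc : ContinuousOn (fun p : ℝ × ℝ => c p.1 p.2) (Set.Icc (-l) 0 ×ˢ Set.Icc 0 T))
    (hct : ContinuousOn (fun p : ℝ × ℝ => ct p.1 p.2) (Set.Icc (-l) 0 ×ˢ Set.Icc 0 T))
    (hcx : ContinuousOn (fun p : ℝ × ℝ => cx p.1 p.2) (Set.Icc (-l) 0 ×ˢ Set.Icc 0 T))
    (hcxx : ContinuousOn (fun p : ℝ × ℝ => cxx p.1 p.2) (Set.Icc (-l) 0 ×ˢ Set.Icc 0 T))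
    (hdt : ∀ x ∈ Set.Icc (-l) 0, ∀ t ∈ Set.Icc 0 T,
      HasDerivWithinAt (fun s => c x s) (ct x t) (Set.Icc 0 T) t)
    (hdx : ∀ x ∈ Set.Icc (-l) 0, ∀ t ∈ Set.Icc 0 T,
      HasDerivWithinAt (fun y => c y t) (cx x t) (Set.Icc (-l) 0) x)
    (hdxx : ∀ x ∈ Set.Icc (-l) 0, ∀ t ∈ Set.Icc 0 T,
      HasDerivWithinAt (fun y => cx y t) (cxx x t) (Set.Icc (-l) 0) x)
    (hpde : ∀ x ∈ Set.Ioo (-l) 0, ∀ t ∈ Set.Ioc 0 T, ct x t = δ * cxx x t)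
    (hbcl : ∀ t ∈ Set.Ioc 0 T, cx (-l) t = 0)
    (hbc0 : ∀ t ∈ Set.Ioc 0 T, cx 0 t + Pt * c 0 t = Pt * g t) :
    ∀ ε > (0 : ℝ), ∀ t ∈ Set.Ioc 0 T,
      ∃ d : ℝ,
        HasDerivWithinAt (fun s => ∫ x in (-l)..0, (c x s) ^ 2) d (Set.Icc 0 T) t ∧
        (1 / 2) * d + δ * (∫ x in (-l)..0, (cx x t) ^ 2) + δ * Pt * (c 0 t) ^ 2 ≤
          δ * Pt * (ε * (c 0 t) ^ 2 + (g t) ^ 2 / (4 * ε)) :=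
  stent_equation_energy_inequality_general δ Pt l T hδ hPt hl g c ct cx cxx hc hct hcxx hdt hdx hdxx
    hpde hbcl hbc0
end

section
/- A priori energy estimate for classical solutions of the coupled drug-release system: let δ, P̃, Pe, Da, K, l, T > 0 and φ ∈ (0,1), and let (c, c₁, c₂) be a classical solution of the coupled drug-release system on [0,T] with initial data c(x,0) = 1 for x ∈ [-l,0] and c₁(x,0) = c₂(x,0) = 0 for x ∈ [0,1]. Set γ := min(φ, 1-φ)/2 and M := Da·(K+1)/(2·K·γ). Then for every t ∈ [0,T]: ∫_{-l}^0 c(x,t)² dx + ∫_0^1 c₁(x,t)² dx + ∫_0^1 c₂(x,t)² dx ≤ (l/(2γ))·e^{M·t}, and moreover δ·∫_0^T ∫_{-l}^0 (∂_x c(x,t))² dx dt + ∫_0^T ∫_0^1 (∂_x c₁(x,t))² dx dt + (Pe/2)·∫_0^T (c₁(0,t)² + c₁(1,t)²) dt ≤ (l/2)·e^{M·T}. -/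
/-!
Energy method. Let `E = ½‖c‖² + (φ/2)‖c₁‖² + ((1-φ)/2)‖c₂‖²`. Multiplying each equation by its
unknown and integrating by parts, the interface conditions collapse all boundary terms into
`-δP̃ (c(0) - c₁(0))² - (Pe/2)(c₁(0)² + c₁(1)²)`, so that with the dissipation rate
`D = δ‖∂ₓc‖² + ‖∂ₓc₁‖² + (Pe/2)(c₁(0)² + c₁(1)²)`
`E' + D = -δP̃ (c(0) - c₁(0))² - Da‖c₁‖² - (Da/K)‖c₂‖² + (Da + Da/K)⟨c₁, c₂⟩ ≤ M E`
by Young's inequality. Grönwall's inequality for `E(t) + ∫₀ᵗ D`, which starts at `l/2`, bounds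
the energy and the dissipation at once, and `γ (‖c‖² + ‖c₁‖² + ‖c₂‖²) ≤ E`.
-/

/-- A classical solution of the coupled 1-d drug-release system on `[0,T]`:
`c` (stent concentration on `[-l,0]`), `c₁` (extracellular) and `c₂` (intracellular,
on `[0,1]`), together with their partial derivatives `ct, cx, cxx`, `c₁t, c₁x, c₁xx`,
`c₂t`, all continuous on the respective space-time boxes, satisfying the PDEs,
boundary and interface conditions of the model. -/
structure IsClassicalSolution (δ Pt Pe Da K l T φ : ℝ)
    (c ct cx cxx c₁ c₁t c₁x c₁xx c₂ c₂t : ℝ → ℝ → ℝ) : Prop where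
  cont_c : ContinuousOn (fun p : ℝ × ℝ => c p.1 p.2) (Set.Icc (-l) 0 ×ˢ Set.Icc 0 T)
  cont_ct : ContinuousOn (fun p : ℝ × ℝ => ct p.1 p.2) (Set.Icc (-l) 0 ×ˢ Set.Icc 0 T)
  cont_cx : ContinuousOn (fun p : ℝ × ℝ => cx p.1 p.2) (Set.Icc (-l) 0 ×ˢ Set.Icc 0 T)
  cont_cxx : ContinuousOn (fun p : ℝ × ℝ => cxx p.1 p.2) (Set.Icc (-l) 0 ×ˢ Set.Icc 0 T)
  cont_c₁ : ContinuousOn (fun p : ℝ × ℝ => c₁ p.1 p.2) (Set.Icc (0 : ℝ) 1 ×ˢ Set.Icc 0 T)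
  cont_c₁t : ContinuousOn (fun p : ℝ × ℝ => c₁t p.1 p.2) (Set.Icc (0 : ℝ) 1 ×ˢ Set.Icc 0 T)
  cont_c₁x : ContinuousOn (fun p : ℝ × ℝ => c₁x p.1 p.2) (Set.Icc (0 : ℝ) 1 ×ˢ Set.Icc 0 T)
  cont_c₁xx : ContinuousOn (fun p : ℝ × ℝ => c₁xx p.1 p.2) (Set.Icc (0 : ℝ) 1 ×ˢ Set.Icc 0 T)
  cont_c₂ : ContinuousOn (fun p : ℝ × ℝ => c₂ p.1 p.2) (Set.Icc (0 : ℝ) 1 ×ˢ Set.Icc 0 T)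
  cont_c₂t : ContinuousOn (fun p : ℝ × ℝ => c₂t p.1 p.2) (Set.Icc (0 : ℝ) 1 ×ˢ Set.Icc 0 T)
  hasDeriv_ct : ∀ x ∈ Set.Icc (-l) 0, ∀ t ∈ Set.Icc 0 T,
    HasDerivWithinAt (fun s => c x s) (ct x t) (Set.Icc 0 T) t
  hasDeriv_cx : ∀ x ∈ Set.Icc (-l) 0, ∀ t ∈ Set.Icc 0 T,
    HasDerivWithinAt (fun y => c y t) (cx x t) (Set.Icc (-l) 0) x
  hasDeriv_cxx : ∀ x ∈ Set.Icc (-l) 0, ∀ t ∈ Set.Icc 0 T,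
    HasDerivWithinAt (fun y => cx y t) (cxx x t) (Set.Icc (-l) 0) x
  hasDeriv_c₁t : ∀ x ∈ Set.Icc (0 : ℝ) 1, ∀ t ∈ Set.Icc 0 T,
    HasDerivWithinAt (fun s => c₁ x s) (c₁t x t) (Set.Icc 0 T) t
  hasDeriv_c₁x : ∀ x ∈ Set.Icc (0 : ℝ) 1, ∀ t ∈ Set.Icc 0 T,
    HasDerivWithinAt (fun y => c₁ y t) (c₁x x t) (Set.Icc (0 : ℝ) 1) x
  hasDeriv_c₁xx : ∀ x ∈ Set.Icc (0 : ℝ) 1, ∀ t ∈ Set.Icc 0 T,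
    HasDerivWithinAt (fun y => c₁x y t) (c₁xx x t) (Set.Icc (0 : ℝ) 1) x
  hasDeriv_c₂t : ∀ x ∈ Set.Icc (0 : ℝ) 1, ∀ t ∈ Set.Icc 0 T,
    HasDerivWithinAt (fun s => c₂ x s) (c₂t x t) (Set.Icc 0 T) t
  pde_c : ∀ x ∈ Set.Ioo (-l) 0, ∀ t ∈ Set.Ioc 0 T, ct x t = δ * cxx x t
  bc_lumen : ∀ t ∈ Set.Ioc 0 T, cx (-l) t = 0
  bc_interface_c : ∀ t ∈ Set.Ioc 0 T, cx 0 t + Pt * c 0 t = Pt * c₁ 0 t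
  pde_c₁ : ∀ x ∈ Set.Ioo (0 : ℝ) 1, ∀ t ∈ Set.Ioc 0 T,
    φ * c₁t x t = c₁xx x t - Pe * c₁x x t - Da * c₁ x t + (Da / K) * c₂ x t
  bc_interface_c₁ : ∀ t ∈ Set.Ioc 0 T, c₁x 0 t - Pe * c₁ 0 t = δ * cx 0 t
  bc_adventitia : ∀ t ∈ Set.Ioc 0 T, c₁x 1 t = 0
  ode_c₂ : ∀ x ∈ Set.Icc (0 : ℝ) 1, ∀ t ∈ Set.Ioc 0 T,
    (1 - φ) * c₂t x t + (Da / K) * c₂ x t = Da * c₁ x t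


open MeasureTheory Set Real

section ParametricIntegral

variable {a b u v : ℝ} {f f' : ℝ → ℝ → ℝ}

theorem continuousOn_intervalIntegral_of_continuousOn_prod (hab : a ≤ b)
    (hf : ContinuousOn (fun p : ℝ × ℝ => f p.1 p.2) (Icc a b ×ˢ Icc u v)) :
    ContinuousOn (fun t => ∫ x in a..b, f x t) (Icc u v) := by
  obtain ⟨C, hC⟩ := (isCompact_Icc.prod isCompact_Icc).exists_bound_of_continuousOn hf
  have hsub : uIoc a b ⊆ Icc a b := by rw [uIoc_of_le hab]; exact Ioc_subset_Icc_self
  intro t ht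
  refine intervalIntegral.continuousWithinAt_of_dominated_interval (bound := fun _ => C) ?_ ?_
    intervalIntegrable_const ?_
  · filter_upwards [self_mem_nhdsWithin] with s hs
    exact ((hf.uncurry_right s hs).mono hsub).aestronglyMeasurable measurableSet_uIoc
  · filter_upwards [self_mem_nhdsWithin] with s hs
    filter_upwards with x hx
    exact hC (x, s) ⟨hsub hx, hs⟩
  · filter_upwards with x hx
    exact hf.uncurry_left x (hsub hx) t ht

theorem hasDerivAt_intervalIntegral_of_continuousOn_prod (hab : a ≤ b)
    (hf : ContinuousOn (fun p : ℝ × ℝ => f p.1 p.2) (Icc a b ×ˢ Icc u v))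
    (hf' : ContinuousOn (fun p : ℝ × ℝ => f' p.1 p.2) (Icc a b ×ˢ Icc u v))
    (hderiv : ∀ x ∈ Icc a b, ∀ t ∈ Icc u v, HasDerivWithinAt (f x) (f' x t) (Icc u v) t)
    {t : ℝ} (ht : t ∈ Ioo u v) :
    HasDerivAt (fun s => ∫ x in a..b, f x s) (∫ x in a..b, f' x t) t := by
  obtain ⟨C, hC⟩ := (isCompact_Icc.prod isCompact_Icc).exists_bound_of_continuousOn hf'
  have hsub : uIoc a b ⊆ Icc a b := by rw [uIoc_of_le hab]; exact Ioc_subset_Icc_self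
  have hslice {g : ℝ → ℝ → ℝ} (hg : ContinuousOn (fun p : ℝ × ℝ => g p.1 p.2) (Icc a b ×ˢ Icc u v))
      {s : ℝ} (hs : s ∈ Icc u v) : AEStronglyMeasurable (g · s) (volume.restrict (uIoc a b)) :=
    ((hg.uncurry_right s hs).mono hsub).aestronglyMeasurable measurableSet_uIoc
  refine (intervalIntegral.hasDerivAt_integral_of_dominated_loc_of_deriv_le (bound := fun _ => C)
    (μ := volume) (F := fun s x => f x s) (F' := fun s x => f' x s)
    (isOpen_Ioo.mem_nhds ht) ?_ ?_ (hslice hf' (Ioo_subset_Icc_self ht)) ?_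
    intervalIntegrable_const ?_).2
  · filter_upwards [Icc_mem_nhds ht.1 ht.2] with s hs using hslice hf hs
  · exact (hf.uncurry_right t (Ioo_subset_Icc_self ht)).intervalIntegrable_of_Icc hab
  · filter_upwards with x hx s hs
    exact hC (x, s) ⟨hsub hx, Ioo_subset_Icc_self hs⟩
  · filter_upwards with x hx s hs
    exact (hderiv x (hsub hx) s (Ioo_subset_Icc_self hs)).hasDerivAt (Icc_mem_nhds hs.1 hs.2)

theorem hasDerivAt_intervalIntegral_sq (hab : a ≤ b)
    (hf : ContinuousOn (fun p : ℝ × ℝ => f p.1 p.2) (Icc a b ×ˢ Icc u v))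
    (hf' : ContinuousOn (fun p : ℝ × ℝ => f' p.1 p.2) (Icc a b ×ˢ Icc u v))
    (hderiv : ∀ x ∈ Icc a b, ∀ t ∈ Icc u v, HasDerivWithinAt (f x) (f' x t) (Icc u v) t)
    {t : ℝ} (ht : t ∈ Ioo u v) :
    HasDerivAt (fun s => ∫ x in a..b, f x s ^ 2) (2 * ∫ x in a..b, f x t * f' x t) t := by
  rw [← intervalIntegral.integral_const_mul]
  exact hasDerivAt_intervalIntegral_of_continuousOn_prod (f := fun x s => f x s ^ 2)
    (f' := fun x s => 2 * (f x s * f' x s)) hab (hf.pow 2) (by fun_prop)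
    (fun x hx s hs => ((hderiv x hx s hs).fun_pow 2).congr_deriv (by ring)) ht

end ParametricIntegral

theorem ContinuousOn.integral_hasDerivAt_right {u v a t : ℝ} {g : ℝ → ℝ}
    (hg : ContinuousOn g (Icc u v)) (ha : a ∈ Icc u v) (ht : t ∈ Ioo u v) :
    HasDerivAt (fun s => ∫ r in a..s, g r) (g t) t :=
  intervalIntegral.integral_hasDerivAt_right
    (hg.mono (uIcc_subset_Icc ha (Ioo_subset_Icc_self ht))).intervalIntegrable
    ((hg.mono Ioo_subset_Icc_self).stronglyMeasurableAtFilter isOpen_Ioo t ht)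
    (hg.continuousAt (Icc_mem_nhds ht.1 ht.2))

theorem intervalIntegral.integral_mul_deriv_self {a b : ℝ} {u u' : ℝ → ℝ}
    (hu : ∀ x ∈ uIcc a b, HasDerivWithinAt u (u' x) (uIcc a b) x)
    (hu' : IntervalIntegrable u' volume a b) :
    ∫ x in a..b, u x * u' x = (u b ^ 2 - u a ^ 2) / 2 := by
  have h := intervalIntegral.integral_mul_deriv_eq_deriv_mul_of_hasDerivWithinAt hu hu hu' hu'
  simp only [mul_comm (u' _)] at h
  linarith

theorem intervalIntegral.integral_sq_nonneg {a b : ℝ} (hab : a ≤ b) (f : ℝ → ℝ) :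
    0 ≤ ∫ x in a..b, f x ^ 2 :=
  intervalIntegral.integral_nonneg hab fun x _ => sq_nonneg (f x)

theorem intervalIntegral.integral_mul_le_add_div_two {a b : ℝ} {f g : ℝ → ℝ} (hab : a ≤ b)
    (hf : ContinuousOn f (Icc a b)) (hg : ContinuousOn g (Icc a b)) :
    ∫ x in a..b, f x * g x ≤ ((∫ x in a..b, f x ^ 2) + ∫ x in a..b, g x ^ 2) / 2 := by
  rw [← intervalIntegral.integral_add, ← intervalIntegral.integral_div]
  · exact intervalIntegral.integral_mono_on hab ((hf.mul hg).intervalIntegrable_of_Icc hab)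
      ((((hf.pow 2).add (hg.pow 2)).div_const 2).intervalIntegrable_of_Icc hab)
      fun x _ => by nlinarith [sq_nonneg (f x - g x)]
  all_goals exact ContinuousOn.intervalIntegrable_of_Icc hab (by fun_prop)

-- Unlike Mathlib's Grönwall lemmas, no derivative at `a` is needed: the equations hold only for
-- `t > 0`.
theorem le_mul_exp_of_hasDerivAt_le_mul {E E' : ℝ → ℝ} {a b K : ℝ}
    (hE : ContinuousOn E (Icc a b)) (hE' : ∀ t ∈ Ioo a b, HasDerivAt E (E' t) t)
    (hbound : ∀ t ∈ Ioo a b, E' t ≤ K * E t) {t : ℝ} (ht : t ∈ Icc a b) :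
    E t ≤ E a * exp (K * (t - a)) := by
  set H : ℝ → ℝ := fun s => exp (-(K * (s - a))) * E s
  have hH' : ∀ s ∈ Ioo a b, HasDerivAt H (exp (-(K * (s - a))) * (E' s - K * E s)) s := by
    intro s hs
    have hexp : HasDerivAt (fun s => exp (-(K * (s - a)))) (exp (-(K * (s - a))) * -K) s := by
      simpa using (((hasDerivAt_id s).sub_const a).const_mul K).neg.exp
    exact (hexp.fun_mul (hE' s hs)).congr_deriv (by ring)
  have hanti : AntitoneOn H (Icc a b) := by
    refine antitoneOn_of_hasDerivWithinAt_nonpos (convex_Icc a b)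
      (f' := fun s => exp (-(K * (s - a))) * (E' s - K * E s))
      ((by fun_prop : Continuous fun s => exp (-(K * (s - a)))).continuousOn.mul hE)
      (fun s hs => ?_) (fun s hs => ?_)
    · rw [interior_Icc] at hs ⊢; exact (hH' s hs).hasDerivWithinAt
    · rw [interior_Icc] at hs
      exact mul_nonpos_of_nonneg_of_nonpos (exp_pos _).le (sub_nonpos.2 (hbound s hs))
  have hHt : H t ≤ E a := by
    simpa [H] using hanti (left_mem_Icc.2 (ht.1.trans ht.2)) ht ht.1
  calc E t = exp (K * (t - a)) * H t := by simp only [H, ← mul_assoc, ← exp_add]; simp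
    _ ≤ exp (K * (t - a)) * E a := by gcongr
    _ = E a * exp (K * (t - a)) := mul_comm _ _

namespace IsClassicalSolution

noncomputable def energy (l φ : ℝ) (c c₁ c₂ : ℝ → ℝ → ℝ) (t : ℝ) : ℝ :=
  (∫ x in (-l)..0, c x t ^ 2) / 2 + φ / 2 * (∫ x in (0:ℝ)..1, c₁ x t ^ 2)
    + (1 - φ) / 2 * ∫ x in (0:ℝ)..1, c₂ x t ^ 2

noncomputable def energyRate (l φ : ℝ) (c ct c₁ c₁t c₂ c₂t : ℝ → ℝ → ℝ) (t : ℝ) : ℝ :=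
  (∫ x in (-l)..0, c x t * ct x t) + φ * (∫ x in (0:ℝ)..1, c₁ x t * c₁t x t)
    + (1 - φ) * ∫ x in (0:ℝ)..1, c₂ x t * c₂t x t

noncomputable def dissipationRate (δ Pe l : ℝ) (cx c₁ c₁x : ℝ → ℝ → ℝ) (t : ℝ) : ℝ :=
  δ * (∫ x in (-l)..0, cx x t ^ 2) + (∫ x in (0:ℝ)..1, c₁x x t ^ 2)
    + Pe / 2 * (c₁ 0 t ^ 2 + c₁ 1 t ^ 2)

noncomputable def dissipation (δ Pe l : ℝ) (cx c₁ c₁x : ℝ → ℝ → ℝ) (t : ℝ) : ℝ :=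
  δ * (∫ s in (0:ℝ)..t, ∫ x in (-l)..0, cx x s ^ 2)
    + (∫ s in (0:ℝ)..t, ∫ x in (0:ℝ)..1, c₁x x s ^ 2)
    + Pe / 2 * ∫ s in (0:ℝ)..t, (c₁ 0 s ^ 2 + c₁ 1 s ^ 2)

theorem energy_zero {l φ : ℝ} {c c₁ c₂ : ℝ → ℝ → ℝ} (hl : 0 ≤ l)
    (hic : ∀ x ∈ Icc (-l) 0, c x 0 = 1) (hic₁ : ∀ x ∈ Icc (0 : ℝ) 1, c₁ x 0 = 0)
    (hic₂ : ∀ x ∈ Icc (0 : ℝ) 1, c₂ x 0 = 0) :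
    energy l φ c c₁ c₂ 0 = l / 2 := by
  have h : ∫ x in (-l)..0, c x 0 ^ 2 = ∫ _ in (-l)..0, 1 :=
    intervalIntegral.integral_congr_Ioo_of_le (neg_nonpos.2 hl) fun x hx => by
      simp [hic x (Ioo_subset_Icc_self hx)]
  have h₁ : ∫ x in (0:ℝ)..1, c₁ x 0 ^ 2 = ∫ _ in (0:ℝ)..1, 0 :=
    intervalIntegral.integral_congr_Ioo_of_le zero_le_one fun x hx => by
      simp [hic₁ x (Ioo_subset_Icc_self hx)]
  have h₂ : ∫ x in (0:ℝ)..1, c₂ x 0 ^ 2 = ∫ _ in (0:ℝ)..1, 0 :=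
    intervalIntegral.integral_congr_Ioo_of_le zero_le_one fun x hx => by
      simp [hic₂ x (Ioo_subset_Icc_self hx)]
  simp only [energy, h, h₁, h₂, intervalIntegral.integral_const, smul_eq_mul]
  ring

theorem mul_add_add_le_energy {l φ γ t : ℝ} {c c₁ c₂ : ℝ → ℝ → ℝ} (hl : 0 ≤ l)
    (hγ : γ ≤ 1 / 2) (hγφ : γ ≤ φ / 2) (hγφ' : γ ≤ (1 - φ) / 2) :
    γ * ((∫ x in (-l)..0, c x t ^ 2) + (∫ x in (0:ℝ)..1, c₁ x t ^ 2)
      + ∫ x in (0:ℝ)..1, c₂ x t ^ 2) ≤ energy l φ c c₁ c₂ t := by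
  have hI := intervalIntegral.integral_sq_nonneg (neg_nonpos.2 hl) (c · t)
  have hI₁ := intervalIntegral.integral_sq_nonneg zero_le_one (c₁ · t)
  have hI₂ := intervalIntegral.integral_sq_nonneg zero_le_one (c₂ · t)
  rw [energy]
  nlinarith [mul_le_mul_of_nonneg_right hγ hI, mul_le_mul_of_nonneg_right hγφ hI₁,
    mul_le_mul_of_nonneg_right hγφ' hI₂]

theorem dissipation_zero {δ Pe l : ℝ} {cx c₁ c₁x : ℝ → ℝ → ℝ} :
    dissipation δ Pe l cx c₁ c₁x 0 = 0 := by
  simp [dissipation]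

theorem dissipation_nonneg {δ Pe l t : ℝ} {cx c₁ c₁x : ℝ → ℝ → ℝ} (hl : 0 ≤ l) (hδ : 0 ≤ δ)
    (hPe : 0 ≤ Pe) (ht : 0 ≤ t) : 0 ≤ dissipation δ Pe l cx c₁ c₁x t := by
  have h := intervalIntegral.integral_nonneg (μ := volume) ht fun s _ =>
    intervalIntegral.integral_sq_nonneg (neg_nonpos.2 hl) (cx · s)
  have h₁ := intervalIntegral.integral_nonneg (μ := volume) ht fun s _ =>
    intervalIntegral.integral_sq_nonneg zero_le_one (c₁x · s)
  have h₂ := intervalIntegral.integral_nonneg (μ := volume) ht fun s _ =>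
    add_nonneg (sq_nonneg (c₁ 0 s)) (sq_nonneg (c₁ 1 s))
  rw [dissipation]
  positivity

variable {δ Pt Pe Da K l T φ : ℝ} {c ct cx cxx c₁ c₁t c₁x c₁xx c₂ c₂t : ℝ → ℝ → ℝ} {t : ℝ}

theorem integral_c_mul_ct
    (hsol : IsClassicalSolution δ Pt Pe Da K l T φ c ct cx cxx c₁ c₁t c₁x c₁xx c₂ c₂t)
    (hl : 0 ≤ l) (ht : t ∈ Ioc 0 T) :
    ∫ x in (-l)..0, c x t * ct x t = δ * (c 0 t * cx 0 t - ∫ x in (-l)..0, cx x t ^ 2) := by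
  have hl' : -l ≤ 0 := neg_nonpos.2 hl
  have ht' : t ∈ Icc 0 T := Ioc_subset_Icc_self ht
  have hibp := intervalIntegral.integral_mul_deriv_eq_deriv_mul_of_hasDerivWithinAt
    (u := fun x => c x t) (v := fun x => cx x t) (u' := fun x => cx x t) (v' := fun x => cxx x t)
    (by rw [uIcc_of_le hl']; exact fun x hx => hsol.hasDeriv_cx x hx t ht')
    (by rw [uIcc_of_le hl']; exact fun x hx => hsol.hasDeriv_cxx x hx t ht')
    ((hsol.cont_cx.uncurry_right t ht').intervalIntegrable_of_Icc hl')
    ((hsol.cont_cxx.uncurry_right t ht').intervalIntegrable_of_Icc hl')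
  calc ∫ x in (-l)..0, c x t * ct x t = ∫ x in (-l)..0, δ * (c x t * cxx x t) :=
        intervalIntegral.integral_congr_Ioo_of_le hl' fun x hx => by
          simp only [hsol.pde_c x hx t ht]; ring
    _ = δ * (c 0 t * cx 0 t - ∫ x in (-l)..0, cx x t ^ 2) := by
        simp only [intervalIntegral.integral_const_mul, hibp, hsol.bc_lumen t ht, sq]
        ring

theorem mul_integral_c₁_mul_c₁t
    (hsol : IsClassicalSolution δ Pt Pe Da K l T φ c ct cx cxx c₁ c₁t c₁x c₁xx c₂ c₂t)
    (ht : t ∈ Ioc 0 T) :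
    φ * ∫ x in (0:ℝ)..1, c₁ x t * c₁t x t =
      -(c₁ 0 t * c₁x 0 t) - (∫ x in (0:ℝ)..1, c₁x x t ^ 2) - Pe / 2 * (c₁ 1 t ^ 2 - c₁ 0 t ^ 2)
        - Da * (∫ x in (0:ℝ)..1, c₁ x t ^ 2) + Da / K * ∫ x in (0:ℝ)..1, c₁ x t * c₂ x t := by
  have ht' : t ∈ Icc 0 T := Ioc_subset_Icc_self ht
  have hi {g : ℝ → ℝ} (hg : ContinuousOn g (Icc 0 1)) : IntervalIntegrable g volume 0 1 :=
    hg.intervalIntegrable_of_Icc zero_le_one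
  have h₁ := hsol.cont_c₁.uncurry_right t ht'
  have h₁x := hsol.cont_c₁x.uncurry_right t ht'
  have h₁xx := hsol.cont_c₁xx.uncurry_right t ht'
  have h₂ := hsol.cont_c₂.uncurry_right t ht'
  have hd₁ : ∀ x ∈ uIcc 0 1, HasDerivWithinAt (c₁ · t) (c₁x x t) (uIcc 0 1) x := by
    rw [uIcc_of_le zero_le_one]; exact fun x hx => hsol.hasDeriv_c₁x x hx t ht'
  have hd₁x : ∀ x ∈ uIcc 0 1, HasDerivWithinAt (c₁x · t) (c₁xx x t) (uIcc 0 1) x := by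
    rw [uIcc_of_le zero_le_one]; exact fun x hx => hsol.hasDeriv_c₁xx x hx t ht'
  have hibp := intervalIntegral.integral_mul_deriv_eq_deriv_mul_of_hasDerivWithinAt hd₁ hd₁x
    (hi h₁x) (hi h₁xx)
  simp only [← sq] at hibp
  calc φ * ∫ x in (0:ℝ)..1, c₁ x t * c₁t x t
      = ∫ x in (0:ℝ)..1, (c₁ x t * c₁xx x t - Pe * (c₁ x t * c₁x x t) - Da * c₁ x t ^ 2
          + Da / K * (c₁ x t * c₂ x t)) := by
        rw [← intervalIntegral.integral_const_mul]
        exact intervalIntegral.integral_congr_Ioo_of_le zero_le_one fun x hx => by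
          linear_combination c₁ x t * hsol.pde_c₁ x hx t ht
    _ = (∫ x in (0:ℝ)..1, c₁ x t * c₁xx x t) - Pe * (∫ x in (0:ℝ)..1, c₁ x t * c₁x x t)
          - Da * (∫ x in (0:ℝ)..1, c₁ x t ^ 2) + Da / K * ∫ x in (0:ℝ)..1, c₁ x t * c₂ x t := by
        rw [intervalIntegral.integral_add, intervalIntegral.integral_sub,
          intervalIntegral.integral_sub, intervalIntegral.integral_const_mul,
          intervalIntegral.integral_const_mul, intervalIntegral.integral_const_mul]
        all_goals exact hi (by fun_prop)
    _ = _ := by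
        rw [hibp, intervalIntegral.integral_mul_deriv_self hd₁ (hi h₁x), hsol.bc_adventitia t ht]
        ring

theorem mul_integral_c₂_mul_c₂t
    (hsol : IsClassicalSolution δ Pt Pe Da K l T φ c ct cx cxx c₁ c₁t c₁x c₁xx c₂ c₂t)
    (ht : t ∈ Ioc 0 T) :
    (1 - φ) * ∫ x in (0:ℝ)..1, c₂ x t * c₂t x t =
      Da * (∫ x in (0:ℝ)..1, c₁ x t * c₂ x t) - Da / K * ∫ x in (0:ℝ)..1, c₂ x t ^ 2 := by
  have ht' : t ∈ Icc 0 T := Ioc_subset_Icc_self ht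
  have h₁ := hsol.cont_c₁.uncurry_right t ht'
  have h₂ := hsol.cont_c₂.uncurry_right t ht'
  calc (1 - φ) * ∫ x in (0:ℝ)..1, c₂ x t * c₂t x t
      = ∫ x in (0:ℝ)..1, (Da * (c₁ x t * c₂ x t) - Da / K * c₂ x t ^ 2) := by
        rw [← intervalIntegral.integral_const_mul]
        exact intervalIntegral.integral_congr_Ioo_of_le zero_le_one fun x hx => by
          linear_combination c₂ x t * hsol.ode_c₂ x (Ioo_subset_Icc_self hx) t ht
    _ = _ := by
        rw [intervalIntegral.integral_sub, intervalIntegral.integral_const_mul,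
          intervalIntegral.integral_const_mul]
        all_goals exact ContinuousOn.intervalIntegrable_of_Icc zero_le_one (by fun_prop)

theorem energy_balance
    (hsol : IsClassicalSolution δ Pt Pe Da K l T φ c ct cx cxx c₁ c₁t c₁x c₁xx c₂ c₂t)
    (hl : 0 ≤ l) (ht : t ∈ Ioc 0 T) :
    energyRate l φ c ct c₁ c₁t c₂ c₂t t + dissipationRate δ Pe l cx c₁ c₁x t =
      -(δ * Pt * (c 0 t - c₁ 0 t) ^ 2) - Da * (∫ x in (0:ℝ)..1, c₁ x t ^ 2)
        - Da / K * (∫ x in (0:ℝ)..1, c₂ x t ^ 2)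
        + (Da + Da / K) * ∫ x in (0:ℝ)..1, c₁ x t * c₂ x t := by
  rw [energyRate, dissipationRate, hsol.integral_c_mul_ct hl ht, hsol.mul_integral_c₁_mul_c₁t ht,
    hsol.mul_integral_c₂_mul_c₂t ht]
  linear_combination δ * (c 0 t - c₁ 0 t) * hsol.bc_interface_c t ht
    - c₁ 0 t * hsol.bc_interface_c₁ t ht

theorem energyRate_add_dissipationRate_le
    (hsol : IsClassicalSolution δ Pt Pe Da K l T φ c ct cx cxx c₁ c₁t c₁x c₁xx c₂ c₂t)
    (hl : 0 ≤ l) (hδ : 0 ≤ δ) (hPt : 0 ≤ Pt) (hDa : 0 ≤ Da) (hK : 0 < K) (ht : t ∈ Ioc 0 T) :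
    energyRate l φ c ct c₁ c₁t c₂ c₂t t + dissipationRate δ Pe l cx c₁ c₁x t ≤
      Da * (K + 1) / (2 * K) * ((∫ x in (0:ℝ)..1, c₁ x t ^ 2) + ∫ x in (0:ℝ)..1, c₂ x t ^ 2) := by
  have ht' : t ∈ Icc 0 T := Ioc_subset_Icc_self ht
  have hyoung := intervalIntegral.integral_mul_le_add_div_two zero_le_one
    (hsol.cont_c₁.uncurry_right t ht') (hsol.cont_c₂.uncurry_right t ht')
  have hI₁ := intervalIntegral.integral_sq_nonneg zero_le_one (c₁ · t)
  have hI₂ := intervalIntegral.integral_sq_nonneg zero_le_one (c₂ · t)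
  have hDaK : 0 ≤ Da / K := div_nonneg hDa hK.le
  have hcoef : Da * (K + 1) / (2 * K) = (Da + Da / K) / 2 := by field_simp
  rw [hsol.energy_balance hl ht, hcoef]
  nlinarith [mul_le_mul_of_nonneg_left hyoung (add_nonneg hDa hDaK),
    mul_nonneg (mul_nonneg hδ hPt) (sq_nonneg (c 0 t - c₁ 0 t))]

theorem hasDerivAt_energy
    (hsol : IsClassicalSolution δ Pt Pe Da K l T φ c ct cx cxx c₁ c₁t c₁x c₁xx c₂ c₂t)
    (hl : 0 ≤ l) (ht : t ∈ Ioo 0 T) :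
    HasDerivAt (energy l φ c c₁ c₂) (energyRate l φ c ct c₁ c₁t c₂ c₂t t) t := by
  have h := hasDerivAt_intervalIntegral_sq (neg_nonpos.2 hl) hsol.cont_c hsol.cont_ct
    hsol.hasDeriv_ct ht
  have h₁ := hasDerivAt_intervalIntegral_sq zero_le_one hsol.cont_c₁ hsol.cont_c₁t
    hsol.hasDeriv_c₁t ht
  have h₂ := hasDerivAt_intervalIntegral_sq zero_le_one hsol.cont_c₂ hsol.cont_c₂t
    hsol.hasDeriv_c₂t ht
  exact ((h.div_const 2).add (h₁.const_mul (φ / 2)) |>.add (h₂.const_mul ((1 - φ) / 2))).congr_deriv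
    (by rw [energyRate]; ring)

theorem continuousOn_energy
    (hsol : IsClassicalSolution δ Pt Pe Da K l T φ c ct cx cxx c₁ c₁t c₁x c₁xx c₂ c₂t)
    (hl : 0 ≤ l) : ContinuousOn (energy l φ c c₁ c₂) (Icc 0 T) := by
  have h := continuousOn_intervalIntegral_of_continuousOn_prod (f := fun x t => c x t ^ 2)
    (neg_nonpos.2 hl) (hsol.cont_c.pow 2)
  have h₁ := continuousOn_intervalIntegral_of_continuousOn_prod (f := fun x t => c₁ x t ^ 2)
    zero_le_one (hsol.cont_c₁.pow 2)
  have h₂ := continuousOn_intervalIntegral_of_continuousOn_prod (f := fun x t => c₂ x t ^ 2)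
    zero_le_one (hsol.cont_c₂.pow 2)
  exact ((h.div_const 2).add (continuousOn_const.mul h₁)).add (continuousOn_const.mul h₂)

theorem continuousOn_dissipationRate_terms
    (hsol : IsClassicalSolution δ Pt Pe Da K l T φ c ct cx cxx c₁ c₁t c₁x c₁xx c₂ c₂t)
    (hl : 0 ≤ l) :
    ContinuousOn (fun s => ∫ x in (-l)..0, cx x s ^ 2) (Icc 0 T) ∧
      ContinuousOn (fun s => ∫ x in (0:ℝ)..1, c₁x x s ^ 2) (Icc 0 T) ∧
      ContinuousOn (fun s => c₁ 0 s ^ 2 + c₁ 1 s ^ 2) (Icc 0 T) :=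
  ⟨continuousOn_intervalIntegral_of_continuousOn_prod (f := fun x t => cx x t ^ 2)
      (neg_nonpos.2 hl) (hsol.cont_cx.pow 2),
    continuousOn_intervalIntegral_of_continuousOn_prod (f := fun x t => c₁x x t ^ 2)
      zero_le_one (hsol.cont_c₁x.pow 2),
    ((hsol.cont_c₁.uncurry_left 0 (left_mem_Icc.2 zero_le_one)).pow 2).add
      ((hsol.cont_c₁.uncurry_left 1 (right_mem_Icc.2 zero_le_one)).pow 2)⟩

theorem hasDerivAt_dissipation
    (hsol : IsClassicalSolution δ Pt Pe Da K l T φ c ct cx cxx c₁ c₁t c₁x c₁xx c₂ c₂t)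
    (hl : 0 ≤ l) (ht : t ∈ Ioo 0 T) :
    HasDerivAt (dissipation δ Pe l cx c₁ c₁x) (dissipationRate δ Pe l cx c₁ c₁x t) t := by
  obtain ⟨h, h₁, h₂⟩ := hsol.continuousOn_dissipationRate_terms hl
  have h0 : (0:ℝ) ∈ Icc 0 T := left_mem_Icc.2 (ht.1.trans ht.2).le
  exact (((ContinuousOn.integral_hasDerivAt_right h h0 ht).const_mul δ).add
    (ContinuousOn.integral_hasDerivAt_right h₁ h0 ht)).add
    ((ContinuousOn.integral_hasDerivAt_right h₂ h0 ht).const_mul (Pe / 2))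

theorem continuousOn_dissipation
    (hsol : IsClassicalSolution δ Pt Pe Da K l T φ c ct cx cxx c₁ c₁t c₁x c₁xx c₂ c₂t)
    (hl : 0 ≤ l) (hT : 0 ≤ T) : ContinuousOn (dissipation δ Pe l cx c₁ c₁x) (Icc 0 T) := by
  obtain ⟨h, h₁, h₂⟩ := hsol.continuousOn_dissipationRate_terms hl
  have hprim {g : ℝ → ℝ} (hg : ContinuousOn g (Icc 0 T)) :
      ContinuousOn (fun t => ∫ s in (0:ℝ)..t, g s) (Icc 0 T) := by
    rw [← uIcc_of_le hT] at hg ⊢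
    exact intervalIntegral.continuousOn_primitive_interval hg.integrableOn_uIcc
  exact ((continuousOn_const.mul (hprim h)).add (hprim h₁)).add (continuousOn_const.mul (hprim h₂))

theorem energy_add_dissipation_le_mul_exp
    (hsol : IsClassicalSolution δ Pt Pe Da K l T φ c ct cx cxx c₁ c₁t c₁x c₁xx c₂ c₂t)
    (hl : 0 ≤ l) (hδ : 0 ≤ δ) (hPt : 0 ≤ Pt) (hPe : 0 ≤ Pe) (hDa : 0 ≤ Da) (hK : 0 < K)
    {M : ℝ} (hM : 0 ≤ M) (hMφ : Da * (K + 1) / (2 * K) ≤ M * (φ / 2))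
    (hMφ' : Da * (K + 1) / (2 * K) ≤ M * ((1 - φ) / 2))
    (hic : ∀ x ∈ Icc (-l) 0, c x 0 = 1) (hic₁ : ∀ x ∈ Icc (0 : ℝ) 1, c₁ x 0 = 0)
    (hic₂ : ∀ x ∈ Icc (0 : ℝ) 1, c₂ x 0 = 0) (ht : t ∈ Icc 0 T) :
    energy l φ c c₁ c₂ t + dissipation δ Pe l cx c₁ c₁x t ≤ l / 2 * exp (M * t) := by
  have hbound (s : ℝ) (hs : s ∈ Ioo 0 T) :
      energyRate l φ c ct c₁ c₁t c₂ c₂t s + dissipationRate δ Pe l cx c₁ c₁x s ≤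
      M * (energy l φ c c₁ c₂ s + dissipation δ Pe l cx c₁ c₁x s) := by
    have hrate := hsol.energyRate_add_dissipationRate_le hl hδ hPt hDa hK (Ioo_subset_Ioc_self hs)
    have hD := dissipation_nonneg (cx := cx) (c₁ := c₁) (c₁x := c₁x) hl hδ hPe hs.1.le
    have hI := intervalIntegral.integral_sq_nonneg (neg_nonpos.2 hl) (c · s)
    have hI₁ := intervalIntegral.integral_sq_nonneg zero_le_one (c₁ · s)
    have hI₂ := intervalIntegral.integral_sq_nonneg zero_le_one (c₂ · s)
    rw [energy]
    nlinarith [mul_le_mul_of_nonneg_right hMφ hI₁, mul_le_mul_of_nonneg_right hMφ' hI₂,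
      mul_nonneg hM hI, mul_nonneg hM hD]
  have h := le_mul_exp_of_hasDerivAt_le_mul
    ((hsol.continuousOn_energy hl).add (hsol.continuousOn_dissipation hl (ht.1.trans ht.2)))
    (fun s hs => (hsol.hasDerivAt_energy hl hs).add (hsol.hasDerivAt_dissipation hl hs))
    hbound ht
  rwa [Pi.add_apply, Pi.add_apply, energy_zero hl hic hic₁ hic₂, dissipation_zero, add_zero,
    sub_zero] at h

end IsClassicalSolution

/-- A priori energy estimate for classical solutions of the coupled drug-release system
with initial data `c ≡ 1`, `c₁ ≡ c₂ ≡ 0`: with `γ := min(φ,1-φ)/2` and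
`M := Da(K+1)/(2Kγ)`, for every `t ∈ [0,T]` the total `L²` energy is bounded by
`(l/(2γ))·e^{Mt}`, and the dissipation terms are bounded by `(l/2)·e^{MT}`. -/
theorem coupled_system_apriori_estimate
    (δ Pt Pe Da K l T φ : ℝ)
    (hδ : 0 < δ) (hPt : 0 < Pt) (hPe : 0 < Pe) (hDa : 0 < Da) (hK : 0 < K)
    (hl : 0 < l) (hT : 0 < T) (hφ : φ ∈ Set.Ioo (0 : ℝ) 1)
    (c ct cx cxx c₁ c₁t c₁x c₁xx c₂ c₂t : ℝ → ℝ → ℝ)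
    (hsol : IsClassicalSolution δ Pt Pe Da K l T φ c ct cx cxx c₁ c₁t c₁x c₁xx c₂ c₂t)
    (hic : ∀ x ∈ Set.Icc (-l) 0, c x 0 = 1)
    (hic₁ : ∀ x ∈ Set.Icc (0 : ℝ) 1, c₁ x 0 = 0)
    (hic₂ : ∀ x ∈ Set.Icc (0 : ℝ) 1, c₂ x 0 = 0) :
    (∀ t ∈ Set.Icc 0 T,
      (∫ x in (-l)..0, (c x t) ^ 2) + (∫ x in (0 : ℝ)..1, (c₁ x t) ^ 2) +
          (∫ x in (0 : ℝ)..1, (c₂ x t) ^ 2) ≤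
        (l / (2 * (min φ (1 - φ) / 2))) *
          Real.exp ((Da * (K + 1) / (2 * K * (min φ (1 - φ) / 2))) * t)) ∧
    δ * (∫ t in (0 : ℝ)..T, ∫ x in (-l)..0, (cx x t) ^ 2) +
        (∫ t in (0 : ℝ)..T, ∫ x in (0 : ℝ)..1, (c₁x x t) ^ 2) +
        (Pe / 2) * (∫ t in (0 : ℝ)..T, ((c₁ 0 t) ^ 2 + (c₁ 1 t) ^ 2)) ≤
      (l / 2) * Real.exp ((Da * (K + 1) / (2 * K * (min φ (1 - φ) / 2))) * T) := by
  obtain ⟨hφ₀, hφ₁⟩ := hφ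
  set γ := min φ (1 - φ) / 2
  set M := Da * (K + 1) / (2 * K * γ) with hM
  have hγ : 0 < γ := half_pos (lt_min hφ₀ (sub_pos.2 hφ₁))
  have hγφ : γ ≤ φ / 2 := div_le_div_of_nonneg_right (min_le_left _ _) zero_le_two
  have hγφ' : γ ≤ (1 - φ) / 2 := div_le_div_of_nonneg_right (min_le_right _ _) zero_le_two
  have hM₀ : 0 ≤ M := by rw [hM]; positivity
  have hMγ : Da * (K + 1) / (2 * K) = M * γ := by rw [hM]; field_simp
  have hbound {t : ℝ} (ht : t ∈ Icc 0 T) :=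
    hsol.energy_add_dissipation_le_mul_exp hl.le hδ.le hPt.le hPe.le hDa.le hK hM₀
      (hMγ ▸ mul_le_mul_of_nonneg_left hγφ hM₀) (hMγ ▸ mul_le_mul_of_nonneg_left hγφ' hM₀)
      hic hic₁ hic₂ ht
  refine ⟨fun t ht => ?_, ?_⟩
  · have hD := IsClassicalSolution.dissipation_nonneg (cx := cx) (c₁ := c₁) (c₁x := c₁x) hl.le
      hδ.le hPe.le ht.1
    have h := (IsClassicalSolution.mul_add_add_le_energy hl.le (by linarith) hγφ hγφ').trans
      ((le_add_of_nonneg_right hD).trans (hbound ht))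
    calc _ ≤ l / 2 * exp (M * t) / γ := (le_div_iff₀' hγ).2 h
      _ = _ := by field_simp
  · have henergy := IsClassicalSolution.mul_add_add_le_energy (γ := 0) (φ := φ) (c := c) (c₁ := c₁)
      (c₂ := c₂) (t := T) hl.le (by norm_num) (by linarith) (by linarith)
    rw [zero_mul] at henergy
    exact (le_add_of_nonneg_left henergy).trans (hbound ⟨hT.le, le_rfl⟩)
end

section
/- A priori bound on the interface trace of the stent concentration: let δ, P̃, l, T > 0, let g : [0,T] → ℝ be continuous, and let c be a classical solution of the stent equation on [-l,0] × [0,T] with interface data g (that is, c, ∂_t c, ∂_x c, ∂_{xx} c are continuous on [-l,0] × [0,T], ∂_t c = δ·∂_{xx} c on (-l,0) × (0,T], ∂_x c(-l,t) = 0 and ∂_x c(0,t) + P̃·c(0,t) = P̃·g(t) for t ∈ (0,T]) satisfying c(x,0) = 1 for all x ∈ [-l,0]. Then ∫_0^T c(0,t)² dt ≤ ∫_0^T g(t)² dt + l/(δ·P̃). -/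
/-!
Energy estimate. Multiply the heat equation by `c` and integrate over the rectangle. In time,
`∫ c ∂ₜc dt` is the change of `c²/2`, so by `c(·,0) = 1` the space-time integral is at least
`-l/2`. In space, one integration by parts gives `δ c(0) ∂ₓc(0) - δ ∫ (∂ₓc)² ≤ δ Pt c(0)(g - c(0))`
by the boundary conditions, and `c(0)(g - c(0)) ≤ (g² - c(0)²)/2`. Comparing the two orders of
integration (Fubini) yields `-l/2 ≤ δ Pt (∫ g² - ∫ c(0)²) / 2`.
-/

open Set MeasureTheory intervalIntegral Function

section Calculus

variable {a b : ℝ} {u u' u'' : ℝ → ℝ}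

theorem integral_mul_deriv_self_of_hasDerivWithinAt (hab : a ≤ b)
    (hu : ∀ x ∈ Icc a b, HasDerivWithinAt u (u' x) (Icc a b) x)
    (hu' : ContinuousOn u' (Icc a b)) :
    ∫ x in a..b, u x * u' x = (u b ^ 2 - u a ^ 2) / 2 := by
  rw [← uIcc_of_le hab] at hu hu'
  have hparts := integral_mul_deriv_eq_deriv_mul_of_hasDerivWithinAt hu hu
    hu'.intervalIntegrable hu'.intervalIntegrable
  simp_rw [mul_comm (u' _)] at hparts
  linarith

theorem integral_mul_second_deriv_le (hab : a ≤ b)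
    (hu : ∀ x ∈ Icc a b, HasDerivWithinAt u (u' x) (Icc a b) x)
    (hu' : ∀ x ∈ Icc a b, HasDerivWithinAt u' (u'' x) (Icc a b) x)
    (hu'c : ContinuousOn u' (Icc a b)) (hu''c : ContinuousOn u'' (Icc a b)) :
    ∫ x in a..b, u x * u'' x ≤ u b * u' b - u a * u' a := by
  rw [← uIcc_of_le hab] at hu hu' hu'c hu''c
  rw [integral_mul_deriv_eq_deriv_mul_of_hasDerivWithinAt hu hu'
    hu'c.intervalIntegrable hu''c.intervalIntegrable]
  exact sub_le_self _ (integral_nonneg hab fun x _ => mul_self_nonneg (u' x))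

end Calculus

section Fubini

variable {E : Type*} [NormedAddCommGroup E] {f : ℝ → ℝ → E} {a b c d : ℝ}

theorem ContinuousOn.integrable_prod_restrict_Ioc
    (hf : ContinuousOn (uncurry f) (Icc a b ×ˢ Icc c d)) :
    Integrable (uncurry f) ((volume.restrict (Ioc a b)).prod (volume.restrict (Ioc c d))) := by
  rw [Measure.prod_restrict, ← Measure.volume_eq_prod]
  exact (hf.integrableOn_compact (isCompact_Icc.prod isCompact_Icc)).mono_set
    (prod_mono Ioc_subset_Icc_self Ioc_subset_Icc_self)

variable [NormedSpace ℝ E]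

theorem ContinuousOn.intervalIntegral_intervalIntegral_swap (hab : a ≤ b) (hcd : c ≤ d)
    (hf : ContinuousOn (uncurry f) (Icc a b ×ˢ Icc c d)) :
    ∫ x in a..b, ∫ y in c..d, f x y = ∫ y in c..d, ∫ x in a..b, f x y := by
  simp only [integral_of_le hab, integral_of_le hcd]
  exact integral_integral_swap hf.integrable_prod_restrict_Ioc

theorem ContinuousOn.intervalIntegrable_intervalIntegral_left (hab : a ≤ b) (hcd : c ≤ d)
    (hf : ContinuousOn (uncurry f) (Icc a b ×ˢ Icc c d)) :
    IntervalIntegrable (fun y => ∫ x in a..b, f x y) volume c d := by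
  rw [intervalIntegrable_iff_integrableOn_Ioc_of_le hcd]
  simp only [integral_of_le hab]
  exact hf.integrable_prod_restrict_Ioc.swap.integral_prod_left

end Fubini

structure IsClassicalStentSolution (δ Pt l T : ℝ) (g : ℝ → ℝ) (c ct cx cxx : ℝ → ℝ → ℝ) :
    Prop where
  continuousOn_c : ContinuousOn (uncurry c) (Icc (-l) 0 ×ˢ Icc 0 T)
  continuousOn_ct : ContinuousOn (uncurry ct) (Icc (-l) 0 ×ˢ Icc 0 T)
  continuousOn_cx : ContinuousOn (uncurry cx) (Icc (-l) 0 ×ˢ Icc 0 T)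
  continuousOn_cxx : ContinuousOn (uncurry cxx) (Icc (-l) 0 ×ˢ Icc 0 T)
  hasDerivWithinAt_t : ∀ x ∈ Icc (-l) 0, ∀ t ∈ Icc 0 T,
    HasDerivWithinAt (fun s => c x s) (ct x t) (Icc 0 T) t
  hasDerivWithinAt_x : ∀ x ∈ Icc (-l) 0, ∀ t ∈ Icc 0 T,
    HasDerivWithinAt (fun y => c y t) (cx x t) (Icc (-l) 0) x
  hasDerivWithinAt_xx : ∀ x ∈ Icc (-l) 0, ∀ t ∈ Icc 0 T,
    HasDerivWithinAt (fun y => cx y t) (cxx x t) (Icc (-l) 0) x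
  heat_eq : ∀ x ∈ Ioo (-l) 0, ∀ t ∈ Ioc 0 T, ct x t = δ * cxx x t
  neumann_left : ∀ t ∈ Ioc 0 T, cx (-l) t = 0
  robin_right : ∀ t ∈ Ioc 0 T, cx 0 t + Pt * c 0 t = Pt * g t

namespace IsClassicalStentSolution

variable {δ Pt l T : ℝ} {g : ℝ → ℝ} {c ct cx cxx : ℝ → ℝ → ℝ}

theorem continuousOn_c_mul_ct (h : IsClassicalStentSolution δ Pt l T g c ct cx cxx) :
    ContinuousOn (uncurry fun x t => c x t * ct x t) (Icc (-l) 0 ×ˢ Icc 0 T) :=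
  h.continuousOn_c.mul h.continuousOn_ct

theorem integral_time_c_mul_ct_eq (h : IsClassicalStentSolution δ Pt l T g c ct cx cxx)
    (hT : 0 ≤ T) {x : ℝ} (hx : x ∈ Icc (-l) 0) :
    ∫ t in 0..T, c x t * ct x t = (c x T ^ 2 - c x 0 ^ 2) / 2 :=
  integral_mul_deriv_self_of_hasDerivWithinAt hT (h.hasDerivWithinAt_t x hx)
    (h.continuousOn_ct.uncurry_left x hx)

theorem neg_half_le_integral_space_time_c_mul_ct
    (h : IsClassicalStentSolution δ Pt l T g c ct cx cxx) (hl : 0 ≤ l) (hT : 0 ≤ T)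
    (hic : ∀ x ∈ Icc (-l) 0, c x 0 = 1) :
    -(l / 2) ≤ ∫ x in -l..0, ∫ t in 0..T, c x t * ct x t := by
  have hl' : -l ≤ 0 := neg_nonpos.mpr hl
  have hcT : ContinuousOn (fun x => c x T) (Icc (-l) 0) :=
    h.continuousOn_c.uncurry_right T (right_mem_Icc.mpr hT)
  calc -(l / 2) = ∫ _ in -l..0, -(1 / 2 : ℝ) := by
        rw [intervalIntegral.integral_const, smul_eq_mul]; ring
    _ ≤ ∫ x in -l..0, (c x T ^ 2 - 1) / 2 :=
      integral_mono_on hl' intervalIntegrable_const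
        ((((hcT.pow 2).sub continuousOn_const).div_const 2).intervalIntegrable_of_Icc hl')
        fun x _ => by linarith [sq_nonneg (c x T)]
    _ = ∫ x in -l..0, ∫ t in 0..T, c x t * ct x t := by
      refine integral_congr fun x hx => ?_
      rw [uIcc_of_le hl'] at hx
      rw [h.integral_time_c_mul_ct_eq hT hx, hic x hx, one_pow]

theorem integral_space_c_mul_ct_le (h : IsClassicalStentSolution δ Pt l T g c ct cx cxx)
    (hδ : 0 ≤ δ) (hPt : 0 ≤ Pt) (hl : 0 ≤ l) {t : ℝ} (ht : t ∈ Ioc 0 T) :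
    ∫ x in -l..0, c x t * ct x t ≤ δ * Pt / 2 * (g t ^ 2 - c 0 t ^ 2) := by
  have hl' : -l ≤ 0 := neg_nonpos.mpr hl
  have ht' : t ∈ Icc 0 T := Ioc_subset_Icc_self ht
  have hparts : ∫ x in -l..0, c x t * cxx x t ≤ c 0 t * cx 0 t - c (-l) t * cx (-l) t :=
    integral_mul_second_deriv_le hl' (h.hasDerivWithinAt_x · · t ht')
      (h.hasDerivWithinAt_xx · · t ht') (h.continuousOn_cx.uncurry_right t ht')
      (h.continuousOn_cxx.uncurry_right t ht')
  have hheat : ∫ x in -l..0, c x t * ct x t = δ * ∫ x in -l..0, c x t * cxx x t := by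
    rw [← intervalIntegral.integral_const_mul]
    refine integral_congr_Ioo_of_le hl' fun x hx => ?_
    simp only [h.heat_eq x hx t ht]
    ring
  have hrobin : cx 0 t = Pt * (g t - c 0 t) := by linarith [h.robin_right t ht]
  rw [hheat]
  rw [hrobin, h.neumann_left t ht] at hparts
  nlinarith [mul_le_mul_of_nonneg_left hparts hδ,
    mul_nonneg (mul_nonneg hδ hPt) (sq_nonneg (g t - c 0 t))]

theorem integral_time_space_c_mul_ct_le (h : IsClassicalStentSolution δ Pt l T g c ct cx cxx)
    (hδ : 0 ≤ δ) (hPt : 0 ≤ Pt) (hl : 0 ≤ l) (hT : 0 ≤ T) (hg : ContinuousOn g (Icc 0 T)) :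
    ∫ t in 0..T, ∫ x in -l..0, c x t * ct x t ≤
      δ * Pt / 2 * ((∫ t in 0..T, g t ^ 2) - ∫ t in 0..T, c 0 t ^ 2) := by
  have hl' : -l ≤ 0 := neg_nonpos.mpr hl
  have hc0 : ContinuousOn (fun t => c 0 t) (Icc 0 T) :=
    h.continuousOn_c.uncurry_left 0 (right_mem_Icc.mpr hl')
  have hg2 : IntervalIntegrable (fun t => g t ^ 2) volume 0 T :=
    (hg.pow 2).intervalIntegrable_of_Icc hT
  have hc2 : IntervalIntegrable (fun t => c 0 t ^ 2) volume 0 T :=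
    (hc0.pow 2).intervalIntegrable_of_Icc hT
  rw [← integral_sub hg2 hc2, ← intervalIntegral.integral_const_mul]
  exact integral_mono_on_of_le_Ioo hT
    (h.continuousOn_c_mul_ct.intervalIntegrable_intervalIntegral_left hl' hT)
    ((continuousOn_const.mul ((hg.pow 2).sub (hc0.pow 2))).intervalIntegrable_of_Icc hT)
    fun t ht => h.integral_space_c_mul_ct_le hδ hPt hl (Ioo_subset_Ioc_self ht)

end IsClassicalStentSolution

/-- A priori bound on the interface trace of the stent concentration: if `c` is a
classical solution of the stent equation `∂ₜc = δ·c_xx` on `[-l,0] × [0,T]` with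
interface data `g` (i.e. `c_x(-l,t) = 0` and `c_x(0,t) + Pt·c(0,t) = Pt·g(t)`) and
initial data `c(·,0) ≡ 1`, then `∫_0^T c(0,t)² dt ≤ ∫_0^T g(t)² dt + l/(δ·Pt)`. -/
theorem stent_interface_trace_apriori_bound
    (δ Pt l T : ℝ) (hδ : 0 < δ) (hPt : 0 < Pt) (hl : 0 < l) (hT : 0 < T)
    (g : ℝ → ℝ) (hg : ContinuousOn g (Set.Icc 0 T))
    (c ct cx cxx : ℝ → ℝ → ℝ)
    (hc : ContinuousOn (fun p : ℝ × ℝ => c p.1 p.2) (Set.Icc (-l) 0 ×ˢ Set.Icc 0 T))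
    (hct : ContinuousOn (fun p : ℝ × ℝ => ct p.1 p.2) (Set.Icc (-l) 0 ×ˢ Set.Icc 0 T))
    (hcx : ContinuousOn (fun p : ℝ × ℝ => cx p.1 p.2) (Set.Icc (-l) 0 ×ˢ Set.Icc 0 T))
    (hcxx : ContinuousOn (fun p : ℝ × ℝ => cxx p.1 p.2) (Set.Icc (-l) 0 ×ˢ Set.Icc 0 T))
    (hdt : ∀ x ∈ Set.Icc (-l) 0, ∀ t ∈ Set.Icc 0 T,
      HasDerivWithinAt (fun s => c x s) (ct x t) (Set.Icc 0 T) t)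
    (hdx : ∀ x ∈ Set.Icc (-l) 0, ∀ t ∈ Set.Icc 0 T,
      HasDerivWithinAt (fun y => c y t) (cx x t) (Set.Icc (-l) 0) x)
    (hdxx : ∀ x ∈ Set.Icc (-l) 0, ∀ t ∈ Set.Icc 0 T,
      HasDerivWithinAt (fun y => cx y t) (cxx x t) (Set.Icc (-l) 0) x)
    (hpde : ∀ x ∈ Set.Ioo (-l) 0, ∀ t ∈ Set.Ioc 0 T, ct x t = δ * cxx x t)
    (hbcl : ∀ t ∈ Set.Ioc 0 T, cx (-l) t = 0)
    (hbc0 : ∀ t ∈ Set.Ioc 0 T, cx 0 t + Pt * c 0 t = Pt * g t)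
    (hic : ∀ x ∈ Set.Icc (-l) 0, c x 0 = 1) :
    (∫ t in (0 : ℝ)..T, (c 0 t) ^ 2) ≤
      (∫ t in (0 : ℝ)..T, (g t) ^ 2) + l / (δ * Pt) := by
  have hsol : IsClassicalStentSolution δ Pt l T g c ct cx cxx :=
    ⟨hc, hct, hcx, hcxx, hdt, hdx, hdxx, hpde, hbcl, hbc0⟩
  have hlower := hsol.neg_half_le_integral_space_time_c_mul_ct hl.le hT.le hic
  have hupper := hsol.integral_time_space_c_mul_ct_le hδ.le hPt.le hl.le hT.le hg
  rw [hsol.continuousOn_c_mul_ct.intervalIntegral_intervalIntegral_swap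
    (neg_nonpos.mpr hl.le) hT.le] at hlower
  rw [← sub_le_iff_le_add', le_div_iff₀ (mul_pos hδ hPt)]
  linarith
end
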